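/- arXiv:2210.10847 — 5 statements merged into one kernel-verified Lean document; each statement's English description precedes it below -/
import Mathlib

section
/- The map Λ⁻¹(Γ̃₁Λ − Λ_{u₁}): U∖λ_Ω⁻¹(0) → M_{2×2}(ℝ) admits a (necessarily unique) C^∞ extension to U if and only if (Λ_{(1)})_{u₁}·I_Ω·(Λ_{(2)})ᵀ − Λ_{(1)}·I_Ω·((Λ_{(2)})_{u₁})ᵀ + E_{u₂} − F_{u₁} belongs to 𝔗_Ω. -/
open Matrix Topology Filter

noncomputable section

/-- Vectors in ℝ³. -/
abbrev V3 : Type := Fin 3 → ℝ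

/-- The Euclidean dot product on ℝ³. -/
def dot3 (v w : V3) : ℝ := v 0 * w 0 + v 1 * w 1 + v 2 * w 2

/-- The cross product on ℝ³. -/
def cross3 (v w : V3) : V3 :=
  ![v 1 * w 2 - v 2 * w 1, v 2 * w 0 - v 0 * w 2, v 0 * w 1 - v 1 * w 0]

/-- Partial derivative in the `u₁` direction. -/
def pd1 {E : Type*} [NormedAddCommGroup E] [NormedSpace ℝ E]
    (f : ℝ × ℝ → E) (q : ℝ × ℝ) : E := fderiv ℝ f q (1, 0)

/-- Partial derivative in the `u₂` direction. -/
def pd2 {E : Type*} [NormedAddCommGroup E] [NormedSpace ℝ E]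
    (f : ℝ × ℝ → E) (q : ℝ × ℝ) : E := fderiv ℝ f q (0, 1)

/-- The singular set `Σ(x)` of `x` on `U`. -/
def SingSet (x : ℝ × ℝ → V3) (U : Set (ℝ × ℝ)) : Set (ℝ × ℝ) :=
  {q ∈ U | ¬ LinearIndependent ℝ ![pd1 x q, pd2 x q]}

/-- `x` is a frontal on the open set `U`, with smooth unit normal field `n`. -/
def IsFrontal (x n : ℝ × ℝ → V3) (U : Set (ℝ × ℝ)) : Prop :=
  IsOpen U ∧ ContDiffOn ℝ (⊤ : ℕ∞) x U ∧ ContDiffOn ℝ (⊤ : ℕ∞) n U ∧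
  (∀ q ∈ U, dot3 (n q) (n q) = 1) ∧
  (∀ q ∈ U, dot3 (pd1 x q) (n q) = 0 ∧ dot3 (pd2 x q) (n q) = 0)

/-- `x` is proper: its singular set has empty interior. -/
def IsProper (x : ℝ × ℝ → V3) (U : Set (ℝ × ℝ)) : Prop :=
  interior (SingSet x U) = ∅

/-- `(w1 w2)` is a tangent moving basis of `x` on `U`. -/
def IsTMB (x w1 w2 : ℝ × ℝ → V3) (U : Set (ℝ × ℝ)) : Prop :=
  ContDiffOn ℝ (⊤ : ℕ∞) w1 U ∧ ContDiffOn ℝ (⊤ : ℕ∞) w2 U ∧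
  (∀ q ∈ U, LinearIndependent ℝ ![w1 q, w2 q]) ∧
  (∀ q ∈ U, pd1 x q ∈ Submodule.span ℝ {w1 q, w2 q} ∧
            pd2 x q ∈ Submodule.span ℝ {w1 q, w2 q})

/-- The unit normal induced by a tangent moving basis: `w₁ × w₂ / ‖w₁ × w₂‖`. -/
def inducedNormal (w1 w2 : ℝ × ℝ → V3) (q : ℝ × ℝ) : V3 :=
  (Real.sqrt (dot3 (cross3 (w1 q) (w2 q)) (cross3 (w1 q) (w2 q))))⁻¹ •
    cross3 (w1 q) (w2 q)

/-- The matrix `I_Ω = Ωᵀ Ω`. -/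
def IOmega (w1 w2 : ℝ × ℝ → V3) (q : ℝ × ℝ) : Matrix (Fin 2) (Fin 2) ℝ :=
  !![dot3 (w1 q) (w1 q), dot3 (w1 q) (w2 q);
     dot3 (w2 q) (w1 q), dot3 (w2 q) (w2 q)]

/-- The matrix `II_Ω`, with `(II_Ω)ᵢⱼ = ⟨(wᵢ)_{uⱼ}, n⟩` for the induced normal `n`. -/
def IIOmega (w1 w2 : ℝ × ℝ → V3) (q : ℝ × ℝ) : Matrix (Fin 2) (Fin 2) ℝ :=
  !![dot3 (pd1 w1 q) (inducedNormal w1 w2 q), dot3 (pd2 w1 q) (inducedNormal w1 w2 q);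
     dot3 (pd1 w2 q) (inducedNormal w1 w2 q), dot3 (pd2 w2 q) (inducedNormal w1 w2 q)]

/-- The Ω-relative curvature `K_Ω = det (−II_Ωᵀ I_Ω⁻¹)`. -/
def relK (w1 w2 : ℝ × ℝ → V3) (q : ℝ × ℝ) : ℝ :=
  (-(IIOmega w1 w2 q)ᵀ * (IOmega w1 w2 q)⁻¹).det

/-- The tangent plane at a regular point, `span{x_{u₁}, x_{u₂}}`. -/
def tangentSpan (x : ℝ × ℝ → V3) (q : ℝ × ℝ) : Submodule ℝ V3 :=
  Submodule.span ℝ {pd1 x q, pd2 x q}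

/-- The Gaussian curvature `K = (eg − f²)/(EG − F²)` w.r.t. the unit normal `n`. -/
def gaussK (x n : ℝ × ℝ → V3) (q : ℝ × ℝ) : ℝ :=
  (dot3 (pd1 (pd1 x) q) (n q) * dot3 (pd2 (pd2 x) q) (n q)
      - dot3 (pd2 (pd1 x) q) (n q) ^ 2) /
    (dot3 (pd1 x q) (pd1 x q) * dot3 (pd2 x q) (pd2 x q)
      - dot3 (pd1 x q) (pd2 x q) ^ 2)

/-- `ξ` is the usual Blaschke normal vector field of `x` on the (regular) set `R`:
`⟨ξ, n⟩ = |K|^{1/4}`, its tangential part `W = ξ − ⟨ξ,n⟩n` is tangent, and `ξ` is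
equiaffine (its partial derivatives are tangent), which encodes `II(W, X) = −X(|K|^{1/4})`. -/
def IsUsualBlaschkeOn (x n ξ : ℝ × ℝ → V3) (R : Set (ℝ × ℝ)) : Prop :=
  ∀ q ∈ R,
    dot3 (ξ q) (n q) = |gaussK x n q| ^ ((4 : ℝ)⁻¹) ∧
    (ξ q - dot3 (ξ q) (n q) • n q ∈ tangentSpan x q) ∧
    pd1 ξ q ∈ tangentSpan x q ∧ pd2 ξ q ∈ tangentSpan x q

/-- `ξ` is the Blaschke vector field of the frontal `x`: a smooth extension to `U` of
the usual Blaschke vector field defined on the regular part `U ∖ Σ(x)`. -/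
def IsBlaschkeField (x n ξ : ℝ × ℝ → V3) (U : Set (ℝ × ℝ)) : Prop :=
  ContDiffOn ℝ (⊤ : ℕ∞) ξ U ∧ IsUsualBlaschkeOn x n ξ (U \ SingSet x U)

/-- Entrywise partial derivative of a matrix-valued map, in the `u₁` direction. -/
def pdMat1 {m n : Type*} (M : ℝ × ℝ → Matrix m n ℝ) (q : ℝ × ℝ) : Matrix m n ℝ :=
  Matrix.of fun i j => pd1 (fun u => M u i j) q

/-- Entrywise partial derivative of a matrix-valued map, in the `u₂` direction. -/
def pdMat2 {m n : Type*} (M : ℝ × ℝ → Matrix m n ℝ) (q : ℝ × ℝ) : Matrix m n ℝ :=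
  Matrix.of fun i j => pd2 (fun u => M u i j) q

namespace St13Aux

open Matrix Topology Filter

variable {U : Set (ℝ × ℝ)}

lemma contDiffOn_pd1 (hU : IsOpen U) {f : ℝ × ℝ → ℝ} (hf : ContDiffOn ℝ (⊤ : ℕ∞) f U) :
    ContDiffOn ℝ (⊤ : ℕ∞) (fun q => pd1 f q) U :=
  (hf.fderiv_of_isOpen hU (by simp)).clm_apply contDiffOn_const

lemma contDiffOn_pd2 (hU : IsOpen U) {f : ℝ × ℝ → ℝ} (hf : ContDiffOn ℝ (⊤ : ℕ∞) f U) :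
    ContDiffOn ℝ (⊤ : ℕ∞) (fun q => pd2 f q) U :=
  (hf.fderiv_of_isOpen hU (by simp)).clm_apply contDiffOn_const

lemma pd1_congr (hU : IsOpen U) {f g : ℝ × ℝ → ℝ} (h : Set.EqOn f g U) {q : ℝ × ℝ}
    (hq : q ∈ U) : pd1 f q = pd1 g q := by
  unfold pd1
  rw [Filter.EventuallyEq.fderiv_eq (Filter.eventuallyEq_of_mem (hU.mem_nhds hq) h)]

lemma pd1_add {f g : ℝ × ℝ → ℝ} {q : ℝ × ℝ} (hf : DifferentiableAt ℝ f q)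
    (hg : DifferentiableAt ℝ g q) :
    pd1 (fun u => f u + g u) q = pd1 f q + pd1 g q := by
  unfold pd1; rw [fderiv_fun_add hf hg]; simp

lemma pd1_mul {f g : ℝ × ℝ → ℝ} {q : ℝ × ℝ} (hf : DifferentiableAt ℝ f q)
    (hg : DifferentiableAt ℝ g q) :
    pd1 (fun u => f u * g u) q = f q * pd1 g q + pd1 f q * g q := by
  unfold pd1; rw [fderiv_fun_mul hf hg]; simp [smul_eq_mul]; ring

lemma pd1_mul3 {f g h : ℝ × ℝ → ℝ} {q : ℝ × ℝ} (hf : DifferentiableAt ℝ f q)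
    (hg : DifferentiableAt ℝ g q) (hh : DifferentiableAt ℝ h q) :
    pd1 (fun u => f u * g u * h u) q
      = pd1 f q * g q * h q + f q * pd1 g q * h q + f q * g q * pd1 h q := by
  rw [pd1_mul (f := fun u => f u * g u) (hf.mul hg) hh, pd1_mul hf hg]; ring

lemma entries_mul {A B : ℝ × ℝ → Matrix (Fin 2) (Fin 2) ℝ}
    (hA : ∀ i j, ContDiffOn ℝ (⊤ : ℕ∞) (fun q => A q i j) U)
    (hB : ∀ i j, ContDiffOn ℝ (⊤ : ℕ∞) (fun q => B q i j) U) :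
    ∀ i j, ContDiffOn ℝ (⊤ : ℕ∞) (fun q => (A q * B q) i j) U := by
  intro i j
  have he : (fun q => (A q * B q) i j) = fun q => A q i 0 * B q 0 j + A q i 1 * B q 1 j := by
    funext q; simp [Matrix.mul_apply, Fin.sum_univ_two]
  rw [he]; exact ((hA i 0).mul (hB 0 j)).add ((hA i 1).mul (hB 1 j))

lemma entries_add {A B : ℝ × ℝ → Matrix (Fin 2) (Fin 2) ℝ}
    (hA : ∀ i j, ContDiffOn ℝ (⊤ : ℕ∞) (fun q => A q i j) U)
    (hB : ∀ i j, ContDiffOn ℝ (⊤ : ℕ∞) (fun q => B q i j) U) :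
    ∀ i j, ContDiffOn ℝ (⊤ : ℕ∞) (fun q => (A q + B q) i j) U := by
  intro i j
  have he : (fun q => (A q + B q) i j) = fun q => A q i j + B q i j := by
    funext q; simp
  rw [he]; exact (hA i j).add (hB i j)

lemma entries_sub {A B : ℝ × ℝ → Matrix (Fin 2) (Fin 2) ℝ}
    (hA : ∀ i j, ContDiffOn ℝ (⊤ : ℕ∞) (fun q => A q i j) U)
    (hB : ∀ i j, ContDiffOn ℝ (⊤ : ℕ∞) (fun q => B q i j) U) :
    ∀ i j, ContDiffOn ℝ (⊤ : ℕ∞) (fun q => (A q - B q) i j) U := by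
  intro i j
  have he : (fun q => (A q - B q) i j) = fun q => A q i j - B q i j := by
    funext q; simp
  rw [he]; exact (hA i j).sub (hB i j)

lemma entries_smul {κ : ℝ × ℝ → ℝ} {A : ℝ × ℝ → Matrix (Fin 2) (Fin 2) ℝ}
    (hκ : ContDiffOn ℝ (⊤ : ℕ∞) κ U)
    (hA : ∀ i j, ContDiffOn ℝ (⊤ : ℕ∞) (fun q => A q i j) U) :
    ∀ i j, ContDiffOn ℝ (⊤ : ℕ∞) (fun q => (κ q • A q) i j) U := by
  intro i j
  have he : (fun q => (κ q • A q) i j) = fun q => κ q * A q i j := by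
    funext q; simp
  rw [he]; exact hκ.mul (hA i j)

lemma entries_det {A : ℝ × ℝ → Matrix (Fin 2) (Fin 2) ℝ}
    (hA : ∀ i j, ContDiffOn ℝ (⊤ : ℕ∞) (fun q => A q i j) U) :
    ContDiffOn ℝ (⊤ : ℕ∞) (fun q => (A q).det) U := by
  have he : (fun q => (A q).det) = fun q => A q 0 0 * A q 1 1 - A q 0 1 * A q 1 0 :=
    funext fun q => Matrix.det_fin_two (A q)
  rw [he]; exact ((hA 0 0).mul (hA 1 1)).sub ((hA 0 1).mul (hA 1 0))

lemma entries_inv {A : ℝ × ℝ → Matrix (Fin 2) (Fin 2) ℝ}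
    (hA : ∀ i j, ContDiffOn ℝ (⊤ : ℕ∞) (fun q => A q i j) U)
    (hdet : ∀ q ∈ U, (A q).det ≠ 0) :
    ∀ i j, ContDiffOn ℝ (⊤ : ℕ∞) (fun q => (A q)⁻¹ i j) U := by
  intro i j
  have he : (fun q => (A q)⁻¹ i j)
      = fun q => ((A q).det)⁻¹ * (!![A q 1 1, -(A q 0 1); -(A q 1 0), A q 0 0] i j) := by
    funext q
    rw [Matrix.inv_def, Ring.inverse_eq_inv', ← Matrix.adjugate_fin_two]
    simp
  rw [he]
  refine ((entries_det hA).inv hdet).mul ?_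
  fin_cases i <;> fin_cases j
  · simpa using hA 1 1
  · simpa using (hA 0 1).neg
  · simpa using (hA 1 0).neg
  · simpa using hA 0 0

lemma entries_pdMat1 (hU : IsOpen U) {A : ℝ × ℝ → Matrix (Fin 2) (Fin 2) ℝ}
    (hA : ∀ i j, ContDiffOn ℝ (⊤ : ℕ∞) (fun q => A q i j) U) :
    ∀ i j, ContDiffOn ℝ (⊤ : ℕ∞) (fun q => pdMat1 A q i j) U :=
  fun i j => contDiffOn_pd1 hU (hA i j)

set_option maxHeartbeats 1000000 in
lemma keyAlg (L W P V : Matrix (Fin 2) (Fin 2) ℝ) (μ : ℝ) (hWs : Wᵀ = W)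
    (hL : L.det ≠ 0) (hW : W.det ≠ 0) :
    L⁻¹ * ((((2:ℝ)⁻¹ • (P*W*Lᵀ + L*V*Lᵀ + L*W*Pᵀ) + (2:ℝ)⁻¹ • !![0,-μ;μ,0]) * (L*W*Lᵀ)⁻¹) * L - P)
    = (2:ℝ)⁻¹ • (V * W⁻¹)
      + ((2*L.det)⁻¹ * ((P*W*Lᵀ) 0 1 - (L*W*Pᵀ) 0 1 + μ)) • (!![(0:ℝ),-1;1,0] * W⁻¹) := by
  have hLu : IsUnit L.det := isUnit_iff_ne_zero.2 hL
  have hWu : IsUnit W.det := isUnit_iff_ne_zero.2 hW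
  have hLTu : IsUnit (Lᵀ).det := by rwa [Matrix.det_transpose]
  have hW10 : W 1 0 = W 0 1 := by
    have := congrFun (congrFun hWs 1) 0
    rw [Matrix.transpose_apply] at this
    exact this.symm
  set c : ℝ := (2*L.det)⁻¹ * ((P*W*Lᵀ) 0 1 - (L*W*Pᵀ) 0 1 + μ) with hc
  set J : Matrix (Fin 2) (Fin 2) ℝ := !![(0:ℝ),-1;1,0] with hJ
  set B : Matrix (Fin 2) (Fin 2) ℝ := (2:ℝ)⁻¹ • V + c • J with hB
  have h2L : (2:ℝ) * L.det ≠ 0 := mul_ne_zero two_ne_zero hL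
  have key0 : (2:ℝ)⁻¹ • (P*W*Lᵀ + L*V*Lᵀ + L*W*Pᵀ) + (2:ℝ)⁻¹ • !![0,-μ;μ,0]
      = L*B*Lᵀ + P*(W*Lᵀ) := by
    rw [hB, hJ, hc]
    have hdet : L.det = L 0 0 * L 1 1 - L 0 1 * L 1 0 := Matrix.det_fin_two L
    ext i j
    fin_cases i <;> fin_cases j <;>
      · simp only [Matrix.mul_apply, Matrix.add_apply, Matrix.smul_apply, Matrix.transpose_apply,
          Fin.sum_univ_two, smul_eq_mul, Matrix.cons_val', Matrix.cons_val_zero,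
          Matrix.cons_val_one, Matrix.head_cons, Matrix.head_fin_const, Matrix.empty_val',
          Matrix.cons_val_fin_one, Fin.isValue, Matrix.of_apply, Fin.zero_eta, Fin.mk_one, Matrix.cons_val_one]
        rw [hdet]
        have hdet2 : L 0 0 * L 1 1 - L 0 1 * L 1 0 ≠ 0 := hdet ▸ hL
        have hdet3 : L 1 1 * L 0 0 - L 1 0 * L 0 1 ≠ 0 := by intro h0; apply hdet2; linarith
        field_simp
        rw [hW10]
        ring
  rw [key0, Matrix.mul_inv_rev, Matrix.mul_inv_rev]
  have e1 : (L*B*Lᵀ + P*(W*Lᵀ)) * ((Lᵀ)⁻¹ * (W⁻¹ * L⁻¹)) * L = L*B*W⁻¹ + P := by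
    simp only [add_mul, ← Matrix.mul_assoc]
    rw [Matrix.mul_nonsing_inv_cancel_right _ _ hLTu, Matrix.mul_nonsing_inv_cancel_right _ _ hLTu,
      Matrix.nonsing_inv_mul_cancel_right _ _ hLu, Matrix.nonsing_inv_mul_cancel_right _ _ hLu,
      Matrix.mul_nonsing_inv_cancel_right _ _ hWu]
  rw [e1, add_sub_cancel_right, ← Matrix.mul_assoc, ← Matrix.mul_assoc,
    Matrix.nonsing_inv_mul _ hLu, Matrix.one_mul, hB, add_mul, Matrix.smul_mul, Matrix.smul_mul]

end St13Aux

/-- The smooth part `S = ½ (I_Ω)_{u₁} I_Ω⁻¹ − H A Λ` of the candidate extension. -/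
def Sfun (IΩ Λ h : ℝ × ℝ → Matrix (Fin 2) (Fin 2) ℝ) (a b : ℝ × ℝ → ℝ) (q : ℝ × ℝ) :
    Matrix (Fin 2) (Fin 2) ℝ :=
  (2:ℝ)⁻¹ • (pdMat1 IΩ q * (IΩ q)⁻¹)
    - !![h q 0 0, (0:ℝ); h q 1 0, 0] * !![a q, b q; (0:ℝ), 0] * Λ q

/-- The obstruction scalar. -/
def sfun (I IΩ Λ : ℝ × ℝ → Matrix (Fin 2) (Fin 2) ℝ) (q : ℝ × ℝ) : ℝ :=
  (fun j => pd1 (fun u => Λ u 0 j) q) ⬝ᵥ (IΩ q *ᵥ fun j => Λ q 1 j)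
    - (fun j => Λ q 0 j) ⬝ᵥ (IΩ q *ᵥ fun j => pd1 (fun u => Λ u 1 j) q)
    + pd2 (fun u => I u 0 0) q - pd1 (fun u => I u 0 1) q


set_option maxHeartbeats 1000000 in
/-- With `I = ΛI_ΩΛᵀ`, `(cᵢⱼ) = (1/φ)[[e,f],[f,g]] = Λ(hᵢⱼ)`, and
`Γ̃₁ = (½I_{u₁} + ½A₁)I⁻¹ − (1/φ)[[ae, be],[af, bf]]` defined on `U ∖ λ_Ω⁻¹(0)`, the map
`Λ⁻¹(Γ̃₁Λ − Λ_{u₁})` admits a smooth extension to `U` if and only if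
`(Λ₍₁₎)_{u₁}·I_Ω·Λ₍₂₎ᵀ − Λ₍₁₎·I_Ω·(Λ₍₂₎)_{u₁}ᵀ + E_{u₂} − F_{u₁}` lies in the principal
ideal `𝔗_Ω` generated by `λ_Ω = det Λ` in `C^∞(U, ℝ)`. -/
theorem statement13 (U : Set (ℝ × ℝ)) (hU : IsOpen U)
    (I IΩ Λ h c : ℝ × ℝ → Matrix (Fin 2) (Fin 2) ℝ)
    (φ a b e f g : ℝ × ℝ → ℝ)
    (hIs : ∀ i j, ContDiffOn ℝ (⊤ : ℕ∞) (fun u => I u i j) U)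
    (hIΩs : ∀ i j, ContDiffOn ℝ (⊤ : ℕ∞) (fun u => IΩ u i j) U)
    (hΛs : ∀ i j, ContDiffOn ℝ (⊤ : ℕ∞) (fun u => Λ u i j) U)
    (hhs : ∀ i j, ContDiffOn ℝ (⊤ : ℕ∞) (fun u => h u i j) U)
    (hcs : ∀ i j, ContDiffOn ℝ (⊤ : ℕ∞) (fun u => c u i j) U)
    (hφs : ContDiffOn ℝ (⊤ : ℕ∞) φ U) (has : ContDiffOn ℝ (⊤ : ℕ∞) a U) (hbs : ContDiffOn ℝ (⊤ : ℕ∞) b U)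
    (hφ0 : ∀ q ∈ U, φ q ≠ 0)
    (hIΩsym : ∀ q ∈ U, (IΩ q)ᵀ = IΩ q)
    (hIΩinv : ∀ q ∈ U, (IΩ q).det ≠ 0)
    (hdense : U ⊆ closure {u ∈ U | (Λ u).det ≠ 0})
    (hI : ∀ q ∈ U, I q = Λ q * IΩ q * (Λ q)ᵀ)
    (hc : ∀ q ∈ U, c q = (φ q)⁻¹ • !![e q, f q; f q, g q])
    (hch : ∀ q ∈ U, c q = Λ q * h q) :
    (∃ D : ℝ × ℝ → Matrix (Fin 2) (Fin 2) ℝ,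
      (∀ i j, ContDiffOn ℝ (⊤ : ℕ∞) (fun u => D u i j) U) ∧
      ∀ q ∈ U, (Λ q).det ≠ 0 →
        D q = (Λ q)⁻¹ *
          (((((2 : ℝ)⁻¹ • pdMat1 I q + (2 : ℝ)⁻¹ •
              !![0, -(pd2 (fun u => I u 0 0) q - pd1 (fun u => I u 0 1) q);
                 pd2 (fun u => I u 0 0) q - pd1 (fun u => I u 0 1) q, 0]) * (I q)⁻¹
            - (φ q)⁻¹ • !![a q * e q, b q * e q; a q * f q, b q * f q]) * Λ q)
          - pdMat1 Λ q)) ↔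
    (∃ ω : ℝ × ℝ → ℝ, ContDiffOn ℝ (⊤ : ℕ∞) ω U ∧
      ∀ q ∈ U,
        (fun j => pd1 (fun u => Λ u 0 j) q) ⬝ᵥ (IΩ q *ᵥ fun j => Λ q 1 j)
          - (fun j => Λ q 0 j) ⬝ᵥ (IΩ q *ᵥ fun j => pd1 (fun u => Λ u 1 j) q)
          + pd2 (fun u => I u 0 0) q - pd1 (fun u => I u 0 1) q
        = ω q * (Λ q).det) := by
  classical
  have hLdet : ContDiffOn ℝ (⊤ : ℕ∞) (fun q => (Λ q).det) U := St13Aux.entries_det hΛs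
  have hWinvE : ∀ i j, ContDiffOn ℝ (⊤ : ℕ∞) (fun q => (IΩ q)⁻¹ i j) U :=
    St13Aux.entries_inv hIΩs hIΩinv
  have hpdWE : ∀ i j, ContDiffOn ℝ (⊤ : ℕ∞) (fun q => pdMat1 IΩ q i j) U :=
    St13Aux.entries_pdMat1 hU hIΩs
  have hHmE : ∀ i j, ContDiffOn ℝ (⊤ : ℕ∞)
      (fun q => (!![h q 0 0, (0:ℝ); h q 1 0, 0] : Matrix (Fin 2) (Fin 2) ℝ) i j) U := by
    intro i j
    fin_cases i <;> fin_cases j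
    · simpa using hhs 0 0
    · simpa using (contDiffOn_const : ContDiffOn ℝ (⊤ : ℕ∞) (fun _ : ℝ × ℝ => (0:ℝ)) U)
    · simpa using hhs 1 0
    · simpa using (contDiffOn_const : ContDiffOn ℝ (⊤ : ℕ∞) (fun _ : ℝ × ℝ => (0:ℝ)) U)
  have hAmE : ∀ i j, ContDiffOn ℝ (⊤ : ℕ∞)
      (fun q => (!![a q, b q; (0:ℝ), 0] : Matrix (Fin 2) (Fin 2) ℝ) i j) U := by
    intro i j
    fin_cases i <;> fin_cases j
    · simpa using has
    · simpa using hbs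
    · simpa using (contDiffOn_const : ContDiffOn ℝ (⊤ : ℕ∞) (fun _ : ℝ × ℝ => (0:ℝ)) U)
    · simpa using (contDiffOn_const : ContDiffOn ℝ (⊤ : ℕ∞) (fun _ : ℝ × ℝ => (0:ℝ)) U)
  have hSE : ∀ i j, ContDiffOn ℝ (⊤ : ℕ∞) (fun q => Sfun IΩ Λ h a b q i j) U := fun i j =>
    (St13Aux.entries_sub
      (St13Aux.entries_smul contDiffOn_const (St13Aux.entries_mul hpdWE hWinvE))
      (St13Aux.entries_mul (St13Aux.entries_mul hHmE hAmE) hΛs)) i j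
  have hsfF : ContDiffOn ℝ (⊤ : ℕ∞) (sfun I IΩ Λ) U := by
    have F : ContDiffOn ℝ (⊤ : ℕ∞) (fun q =>
        (pd1 (fun u => Λ u 0 0) q * (IΩ q 0 0 * Λ q 1 0 + IΩ q 0 1 * Λ q 1 1)
          + pd1 (fun u => Λ u 0 1) q * (IΩ q 1 0 * Λ q 1 0 + IΩ q 1 1 * Λ q 1 1))
        - (Λ q 0 0 * (IΩ q 0 0 * pd1 (fun u => Λ u 1 0) q + IΩ q 0 1 * pd1 (fun u => Λ u 1 1) q)
          + Λ q 0 1 * (IΩ q 1 0 * pd1 (fun u => Λ u 1 0) q + IΩ q 1 1 * pd1 (fun u => Λ u 1 1) q))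
        + pd2 (fun u => I u 0 0) q - pd1 (fun u => I u 0 1) q) U := by
      refine ContDiffOn.sub (ContDiffOn.add (ContDiffOn.sub ?_ ?_)
        (St13Aux.contDiffOn_pd2 hU (hIs 0 0))) (St13Aux.contDiffOn_pd1 hU (hIs 0 1))
      · exact ((St13Aux.contDiffOn_pd1 hU (hΛs 0 0)).mul
            (((hIΩs 0 0).mul (hΛs 1 0)).add ((hIΩs 0 1).mul (hΛs 1 1)))).add
          ((St13Aux.contDiffOn_pd1 hU (hΛs 0 1)).mul
            (((hIΩs 1 0).mul (hΛs 1 0)).add ((hIΩs 1 1).mul (hΛs 1 1))))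
      · exact ((hΛs 0 0).mul (((hIΩs 0 0).mul (St13Aux.contDiffOn_pd1 hU (hΛs 1 0))).add
            ((hIΩs 0 1).mul (St13Aux.contDiffOn_pd1 hU (hΛs 1 1))))).add
          ((hΛs 0 1).mul (((hIΩs 1 0).mul (St13Aux.contDiffOn_pd1 hU (hΛs 1 0))).add
            ((hIΩs 1 1).mul (St13Aux.contDiffOn_pd1 hU (hΛs 1 1)))))
    refine F.congr fun q hq => ?_
    simp [sfun, dotProduct, Matrix.mulVec, Fin.sum_univ_two]
    try ring
  have hPI : ∀ q ∈ U, pdMat1 I q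
      = pdMat1 Λ q * IΩ q * (Λ q)ᵀ + Λ q * pdMat1 IΩ q * (Λ q)ᵀ
        + Λ q * IΩ q * (pdMat1 Λ q)ᵀ := by
    intro q hq
    have hdL : ∀ i j : Fin 2, DifferentiableAt ℝ (fun u => Λ u i j) q := fun i j =>
      ((hΛs i j).contDiffAt (hU.mem_nhds hq)).differentiableAt (by simp)
    have hdW : ∀ i j : Fin 2, DifferentiableAt ℝ (fun u => IΩ u i j) q := fun i j =>
      ((hIΩs i j).contDiffAt (hU.mem_nhds hq)).differentiableAt (by simp)
    ext i j
    have T : ∀ k l : Fin 2, DifferentiableAt ℝ (fun u => Λ u i k * IΩ u k l * Λ u j l) q :=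
      fun k l => ((hdL i k).mul (hdW k l)).mul (hdL j l)
    have heq : Set.EqOn (fun u => I u i j)
        (fun u => Λ u i 0 * IΩ u 0 0 * Λ u j 0 + Λ u i 0 * IΩ u 0 1 * Λ u j 1
          + Λ u i 1 * IΩ u 1 0 * Λ u j 0 + Λ u i 1 * IΩ u 1 1 * Λ u j 1) U := by
      intro u hu
      simp only
      rw [hI u hu]
      simp [Matrix.mul_apply, Fin.sum_univ_two, Matrix.transpose_apply]
      try ring
    show pd1 (fun u => I u i j) q = _
    rw [St13Aux.pd1_congr hU heq hq,
      St13Aux.pd1_add (((T 0 0).fun_add (T 0 1)).fun_add (T 1 0)) (T 1 1),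
      St13Aux.pd1_add ((T 0 0).fun_add (T 0 1)) (T 1 0),
      St13Aux.pd1_add (T 0 0) (T 0 1),
      St13Aux.pd1_mul3 (hdL i 0) (hdW 0 0) (hdL j 0),
      St13Aux.pd1_mul3 (hdL i 0) (hdW 0 1) (hdL j 1),
      St13Aux.pd1_mul3 (hdL i 1) (hdW 1 0) (hdL j 0),
      St13Aux.pd1_mul3 (hdL i 1) (hdW 1 1) (hdL j 1)]
    simp [Matrix.mul_apply, Matrix.add_apply, Fin.sum_univ_two, Matrix.transpose_apply, pdMat1]
    try ring
  have hM : ∀ q ∈ U, (φ q)⁻¹ • !![a q * e q, b q * e q; a q * f q, b q * f q]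
      = Λ q * (!![h q 0 0, (0:ℝ); h q 1 0, 0] * !![a q, b q; (0:ℝ), 0]) := by
    intro q hq
    have hcol : ∀ i : Fin 2, Λ q i 0 * h q 0 0 + Λ q i 1 * h q 1 0 = c q i 0 := by
      intro i
      rw [hch q hq]
      simp [Matrix.mul_apply, Fin.sum_univ_two]
    have hc00 : c q 0 0 = (φ q)⁻¹ * e q := by rw [hc q hq]; simp
    have hc10 : c q 1 0 = (φ q)⁻¹ * f q := by rw [hc q hq]; simp
    have h0 := hcol 0; rw [hc00] at h0
    have h1 := hcol 1; rw [hc10] at h1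
    ext i j
    fin_cases i <;> fin_cases j
    · simp [Matrix.mul_apply, Fin.sum_univ_two]
      linear_combination (-(a q)) * h0
    · simp [Matrix.mul_apply, Fin.sum_univ_two]
      linear_combination (-(b q)) * h0
    · simp [Matrix.mul_apply, Fin.sum_univ_two]
      linear_combination (-(a q)) * h1
    · simp [Matrix.mul_apply, Fin.sum_univ_two]
      linear_combination (-(b q)) * h1
  have hsfe : ∀ q : ℝ × ℝ,
      (pdMat1 Λ q * IΩ q * (Λ q)ᵀ) 0 1 - (Λ q * IΩ q * (pdMat1 Λ q)ᵀ) 0 1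
        + (pd2 (fun u => I u 0 0) q - pd1 (fun u => I u 0 1) q) = sfun I IΩ Λ q := by
    intro q
    simp [sfun, pdMat1, dotProduct, Matrix.mulVec, Matrix.mul_apply, Matrix.transpose_apply,
      Fin.sum_univ_two]
    ring
  have hKEY : ∀ q ∈ U, (Λ q).det ≠ 0 →
      (Λ q)⁻¹ *
          (((((2 : ℝ)⁻¹ • pdMat1 I q + (2 : ℝ)⁻¹ •
              !![0, -(pd2 (fun u => I u 0 0) q - pd1 (fun u => I u 0 1) q);
                 pd2 (fun u => I u 0 0) q - pd1 (fun u => I u 0 1) q, 0]) * (I q)⁻¹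
            - (φ q)⁻¹ • !![a q * e q, b q * e q; a q * f q, b q * f q]) * Λ q)
          - pdMat1 Λ q)
        = Sfun IΩ Λ h a b q
          + ((2*(Λ q).det)⁻¹ * sfun I IΩ Λ q) • (!![(0:ℝ),-1;1,0] * (IΩ q)⁻¹) := by
    intro q hq hd
    rw [hPI q hq, hI q hq, hM q hq, sub_mul, sub_right_comm, Matrix.mul_sub,
      St13Aux.keyAlg (Λ q) (IΩ q) (pdMat1 Λ q) (pdMat1 IΩ q)
        (pd2 (fun u => I u 0 0) q - pd1 (fun u => I u 0 1) q) (hIΩsym q hq) hd (hIΩinv q hq),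
      Matrix.mul_assoc (Λ q) _ (Λ q),
      Matrix.nonsing_inv_mul_cancel_left _ _ (isUnit_iff_ne_zero.2 hd),
      hsfe q]
    unfold Sfun
    abel
  constructor
  · rintro ⟨D, hDs, hDeq⟩
    have hωs : ContDiffOn ℝ (⊤ : ℕ∞)
        (fun q => -2 * (((D q - Sfun IΩ Λ h a b q) * IΩ q) 0 1)) U :=
      contDiffOn_const.mul (St13Aux.entries_mul (St13Aux.entries_sub hDs hSE) hIΩs 0 1)
    have hVeq : ∀ q ∈ U, (Λ q).det ≠ 0 →
        sfun I IΩ Λ q = (-2 * (((D q - Sfun IΩ Λ h a b q) * IΩ q) 0 1)) * (Λ q).det := by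
      intro q hq hd
      have hDq := hDeq q hq hd
      rw [hKEY q hq hd] at hDq
      have h1 : D q - Sfun IΩ Λ h a b q
          = ((2*(Λ q).det)⁻¹ * sfun I IΩ Λ q) • (!![(0:ℝ),-1;1,0] * (IΩ q)⁻¹) := by
        rw [hDq, add_sub_cancel_left]
      have h2 : (D q - Sfun IΩ Λ h a b q) * IΩ q
          = ((2*(Λ q).det)⁻¹ * sfun I IΩ Λ q) • (!![(0:ℝ),-1;1,0] : Matrix (Fin 2) (Fin 2) ℝ) := by
        rw [h1, Matrix.smul_mul, Matrix.mul_assoc,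
          Matrix.nonsing_inv_mul _ (isUnit_iff_ne_zero.2 (hIΩinv q hq)), Matrix.mul_one]
      rw [h2]
      have h3 : ((((2*(Λ q).det)⁻¹ * sfun I IΩ Λ q) •
          (!![(0:ℝ),-1;1,0] : Matrix (Fin 2) (Fin 2) ℝ)) 0 1)
          = -((2*(Λ q).det)⁻¹ * sfun I IΩ Λ q) := by simp
      rw [h3]
      have h2d : (2:ℝ) * (Λ q).det ≠ 0 := mul_ne_zero two_ne_zero hd
      field_simp
    refine ⟨fun q => -2 * (((D q - Sfun IΩ Λ h a b q) * IΩ q) 0 1), hωs, ?_⟩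
    intro q hq
    show sfun I IΩ Λ q
      = -2 * (((D q - Sfun IΩ Λ h a b q) * IΩ q) 0 1) * (Λ q).det
    set V : Set (ℝ × ℝ) := {u ∈ U | (Λ u).det ≠ 0} with hV
    set gg : ℝ × ℝ → ℝ := fun x => sfun I IΩ Λ x
      - (-2 * (((D x - Sfun IΩ Λ h a b x) * IΩ x) 0 1)) * (Λ x).det with hgg
    have hggs : ContDiffOn ℝ (⊤ : ℕ∞) gg U := hsfF.sub (hωs.mul hLdet)
    have hca : ContinuousAt gg q := hggs.continuousOn.continuousAt (hU.mem_nhds hq)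
    haveI hne : (𝓝[V] q).NeBot := mem_closure_iff_nhdsWithin_neBot.mp (hdense hq)
    have t1 : Filter.Tendsto gg (𝓝[V] q) (𝓝 (gg q)) := hca.continuousWithinAt
    have t2 : Filter.Tendsto gg (𝓝[V] q) (𝓝 0) := by
      refine Filter.Tendsto.congr' ?_ tendsto_const_nhds
      filter_upwards [self_mem_nhdsWithin] with x hx
      exact (sub_eq_zero_of_eq (hVeq x hx.1 hx.2)).symm
    have h0 : gg q = 0 := tendsto_nhds_unique t1 t2
    have h0' : sfun I IΩ Λ q
        - (-2 * (((D q - Sfun IΩ Λ h a b q) * IΩ q) 0 1)) * (Λ q).det = 0 := h0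
    linarith [h0']
  · rintro ⟨ω, hωs, hωeq⟩
    refine ⟨fun q => Sfun IΩ Λ h a b q + ((2:ℝ)⁻¹ * ω q) • (!![(0:ℝ),-1;1,0] * (IΩ q)⁻¹),
      ?_, ?_⟩
    · exact St13Aux.entries_add hSE
        (St13Aux.entries_smul (contDiffOn_const.mul hωs)
          (St13Aux.entries_mul (fun i j => contDiffOn_const) hWinvE))
    · intro q hq hd
      rw [hKEY q hq hd]
      have hsq : sfun I IΩ Λ q = ω q * (Λ q).det := hωeq q hq
      have hcc : (2*(Λ q).det)⁻¹ * sfun I IΩ Λ q = (2:ℝ)⁻¹ * ω q := by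
        rw [hsq]
        field_simp
      rw [hcc]

end
end

section
/- The map Λ⁻¹(Γ̃₂Λ − Λ_{u₂}): U∖λ_Ω⁻¹(0) → M_{2×2}(ℝ) admits a (necessarily unique) C^∞ extension to U if and only if (Λ_{(1)})_{u₂}·I_Ω·(Λ_{(2)})ᵀ − Λ_{(1)}·I_Ω·((Λ_{(2)})_{u₂})ᵀ + F_{u₂} − G_{u₁} belongs to 𝔗_Ω. -/
open Matrix Topology Filter

noncomputable section

namespace S14

open Matrix Topology Filter

def Jm : Matrix (Fin 2) (Fin 2) ℝ := !![0,-1;1,0]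

lemma jconj (L : Matrix (Fin 2) (Fin 2) ℝ) : L * Jm * Lᵀ = L.det • Jm := by
  ext i j
  fin_cases i <;> fin_cases j <;>
    simp [Jm, Matrix.mul_apply, Fin.sum_univ_two, Matrix.det_fin_two] <;> ring

lemma antisym2 (N : Matrix (Fin 2) (Fin 2) ℝ) : Nᵀ - N = (N 0 1 - N 1 0) • Jm := by
  ext i j
  fin_cases i <;> fin_cases j <;> simp [Jm] <;> ring

lemma coreM (L L' W W' H : Matrix (Fin 2) (Fin 2) ℝ) (t : ℝ)
    (hWs : Wᵀ = W) (hL : L.det ≠ 0) (hW : W.det ≠ 0) :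
    L⁻¹ * ((((2:ℝ)⁻¹ • (L'*W*Lᵀ + L*W'*Lᵀ + L*W*L'ᵀ) + (2:ℝ)⁻¹ • (t • Jm))
        * (L*W*Lᵀ)⁻¹ - L * H) * L - L')
    = ((2:ℝ)⁻¹ * ((L⁻¹*L'*W) 0 1 - (L⁻¹*L'*W) 1 0) + 2⁻¹ * t * (L.det)⁻¹) • (Jm * W⁻¹)
      + (2:ℝ)⁻¹ • (W' * W⁻¹) - H * L := by
  have hLu : IsUnit L.det := isUnit_iff_ne_zero.2 hL
  have hWu : IsUnit W.det := isUnit_iff_ne_zero.2 hW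
  have hLTu : IsUnit (Lᵀ).det := by simpa using hLu
  have hL1 : L⁻¹ * L = 1 := nonsing_inv_mul L hLu
  have hW1 : W * W⁻¹ = 1 := mul_nonsing_inv W hWu
  have hIinv : (L*W*Lᵀ)⁻¹ = (Lᵀ)⁻¹ * (W⁻¹ * L⁻¹) := by
    rw [Matrix.mul_inv_rev, Matrix.mul_inv_rev]
  have cL : ∀ B : Matrix (Fin 2) (Fin 2) ℝ, L⁻¹ * (L * B) = B :=
    fun B => nonsing_inv_mul_cancel_left L B hLu
  have cLT : ∀ B : Matrix (Fin 2) (Fin 2) ℝ, Lᵀ * ((Lᵀ)⁻¹ * B) = B :=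
    fun B => mul_nonsing_inv_cancel_left Lᵀ B hLTu
  have ePT : ∀ B : Matrix (Fin 2) (Fin 2) ℝ, L'ᵀ * ((Lᵀ)⁻¹ * B) = (L⁻¹*L')ᵀ * B := by
    intro B
    rw [← Matrix.transpose_nonsing_inv, ← mul_assoc, ← Matrix.transpose_mul]
  have eJ : ∀ B : Matrix (Fin 2) (Fin 2) ℝ,
      L⁻¹ * (Jm * ((Lᵀ)⁻¹ * B)) = (L.det)⁻¹ • (Jm * B) := by
    intro B
    have h1 : L⁻¹ * (L * Jm * Lᵀ) * (Lᵀ)⁻¹ = Jm := by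
      rw [show L⁻¹ * (L * Jm * Lᵀ) * (Lᵀ)⁻¹ = L⁻¹ * (L * (Jm * (Lᵀ * (Lᵀ)⁻¹))) by
        simp only [mul_assoc], mul_nonsing_inv _ hLTu, mul_one, cL]
    rw [jconj] at h1
    have h2 : L⁻¹ * Jm * (Lᵀ)⁻¹ = (L.det)⁻¹ • Jm := by
      have h3 : L.det • (L⁻¹ * Jm * (Lᵀ)⁻¹) = Jm := by
        calc L.det • (L⁻¹ * Jm * (Lᵀ)⁻¹) = L⁻¹ * (L.det • Jm) * (Lᵀ)⁻¹ := by
              simp only [Matrix.mul_smul, Matrix.smul_mul]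
          _ = Jm := h1
      have h4 := congrArg (fun M : Matrix (Fin 2) (Fin 2) ℝ => (L.det)⁻¹ • M) h3
      simpa [smul_smul, inv_mul_cancel₀ hL] using h4
    calc L⁻¹ * (Jm * ((Lᵀ)⁻¹ * B)) = (L⁻¹ * Jm * (Lᵀ)⁻¹) * B := by simp only [mul_assoc]
      _ = ((L.det)⁻¹ • Jm) * B := by rw [h2]
      _ = (L.det)⁻¹ • (Jm * B) := by rw [Matrix.smul_mul]
  have hanti : W * ((L⁻¹*L')ᵀ * W⁻¹)
      = ((L⁻¹*L'*W) 0 1 - (L⁻¹*L'*W) 1 0) • (Jm * W⁻¹) + L⁻¹*L' := by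
    have hWT : W * (L⁻¹*L')ᵀ = (L⁻¹*L'*W)ᵀ := by
      rw [show (L⁻¹*L'*W)ᵀ = Wᵀ * (L⁻¹*L')ᵀ from Matrix.transpose_mul _ _, hWs]
    calc W * ((L⁻¹*L')ᵀ * W⁻¹) = (W * (L⁻¹*L')ᵀ) * W⁻¹ := by rw [mul_assoc]
      _ = ((L⁻¹*L'*W)ᵀ - L⁻¹*L'*W) * W⁻¹ + (L⁻¹*L'*W) * W⁻¹ := by rw [hWT]; noncomm_ring
      _ = ((L⁻¹*L'*W) 0 1 - (L⁻¹*L'*W) 1 0) • (Jm * W⁻¹) + L⁻¹*L' := by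
          rw [antisym2, Matrix.smul_mul, mul_nonsing_inv_cancel_right _ _ hWu]
  rw [hIinv]
  simp only [Matrix.mul_add, Matrix.add_mul, Matrix.sub_mul, Matrix.mul_sub,
    Matrix.smul_mul, Matrix.mul_smul, smul_add, mul_assoc]
  simp only [cL, cLT, ePT, eJ, hL1, hW1, mul_one]
  rw [hanti]
  simp only [mul_assoc]
  module

lemma contDiffOn_pd2 {U : Set (ℝ × ℝ)} (hU : IsOpen U) {f : ℝ × ℝ → ℝ}
    (hf : ContDiffOn ℝ (⊤ : ℕ∞) f U) : ContDiffOn ℝ (⊤ : ℕ∞) (pd2 f) U :=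
  (hf.fderiv_of_isOpen hU (by simp)).clm_apply contDiffOn_const

lemma contDiffOn_pd1 {U : Set (ℝ × ℝ)} (hU : IsOpen U) {f : ℝ × ℝ → ℝ}
    (hf : ContDiffOn ℝ (⊤ : ℕ∞) f U) : ContDiffOn ℝ (⊤ : ℕ∞) (pd1 f) U :=
  (hf.fderiv_of_isOpen hU (by simp)).clm_apply contDiffOn_const

lemma pd2_congr {f g : ℝ × ℝ → ℝ} {q : ℝ × ℝ} (h : f =ᶠ[𝓝 q] g) : pd2 f q = pd2 g q := by
  unfold pd2; rw [h.fderiv_eq]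

lemma pd2_add {f g : ℝ × ℝ → ℝ} {q : ℝ × ℝ} (hf : DifferentiableAt ℝ f q)
    (hg : DifferentiableAt ℝ g q) :
    pd2 (fun u => f u + g u) q = pd2 f q + pd2 g q := by
  unfold pd2; rw [fderiv_fun_add hf hg]; rfl

lemma pd2_mul {f g : ℝ × ℝ → ℝ} {q : ℝ × ℝ} (hf : DifferentiableAt ℝ f q)
    (hg : DifferentiableAt ℝ g q) :
    pd2 (fun u => f u * g u) q = pd2 f q * g q + f q * pd2 g q := by
  unfold pd2
  rw [fderiv_fun_mul hf hg]
  simp [smul_eq_mul]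
  ring

lemma pd2_triple {f g h : ℝ × ℝ → ℝ} {q : ℝ × ℝ} (hf : DifferentiableAt ℝ f q)
    (hg : DifferentiableAt ℝ g q) (hh : DifferentiableAt ℝ h q) :
    pd2 (fun u => f u * g u * h u) q
      = pd2 f q * g q * h q + f q * pd2 g q * h q + f q * g q * pd2 h q := by
  rw [pd2_mul (hf.fun_mul hg) hh, pd2_mul hf hg]
  ring

lemma pd2_entry {q : ℝ × ℝ} (a1 b1 c1 a2 b2 c2 a3 b3 c3 a4 b4 c4 : ℝ × ℝ → ℝ)
    (da1 : DifferentiableAt ℝ a1 q) (db1 : DifferentiableAt ℝ b1 q) (dc1 : DifferentiableAt ℝ c1 q)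
    (da2 : DifferentiableAt ℝ a2 q) (db2 : DifferentiableAt ℝ b2 q) (dc2 : DifferentiableAt ℝ c2 q)
    (da3 : DifferentiableAt ℝ a3 q) (db3 : DifferentiableAt ℝ b3 q) (dc3 : DifferentiableAt ℝ c3 q)
    (da4 : DifferentiableAt ℝ a4 q) (db4 : DifferentiableAt ℝ b4 q) (dc4 : DifferentiableAt ℝ c4 q) :
    pd2 (fun u => a1 u * b1 u * c1 u + a2 u * b2 u * c2 u + a3 u * b3 u * c3 u
        + a4 u * b4 u * c4 u) q
    = (pd2 a1 q * b1 q * c1 q + a1 q * pd2 b1 q * c1 q + a1 q * b1 q * pd2 c1 q)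
      + (pd2 a2 q * b2 q * c2 q + a2 q * pd2 b2 q * c2 q + a2 q * b2 q * pd2 c2 q)
      + (pd2 a3 q * b3 q * c3 q + a3 q * pd2 b3 q * c3 q + a3 q * b3 q * pd2 c3 q)
      + (pd2 a4 q * b4 q * c4 q + a4 q * pd2 b4 q * c4 q + a4 q * b4 q * pd2 c4 q) := by
  have t1 := (da1.fun_mul db1).fun_mul dc1
  have t2 := (da2.fun_mul db2).fun_mul dc2
  have t3 := (da3.fun_mul db3).fun_mul dc3
  have t4 := (da4.fun_mul db4).fun_mul dc4
  rw [pd2_add ((t1.fun_add t2).fun_add t3) t4, pd2_add (t1.fun_add t2) t3, pd2_add t1 t2,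
    pd2_triple da1 db1 dc1, pd2_triple da2 db2 dc2, pd2_triple da3 db3 dc3,
    pd2_triple da4 db4 dc4]

lemma eq_zero_of_dense {U : Set (ℝ × ℝ)} (hU : IsOpen U) {s : Set (ℝ × ℝ)} {F : ℝ × ℝ → ℝ}
    (hF : ContinuousOn F U) (h0 : ∀ q ∈ s, F q = 0) (hd : U ⊆ closure s)
    {q : ℝ × ℝ} (hq : q ∈ U) : F q = 0 := by
  have hne : (𝓝[s] q).NeBot := mem_closure_iff_nhdsWithin_neBot.1 (hd hq)
  have h1 : Tendsto F (𝓝[s] q) (𝓝 (F q)) :=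
    ((hF.continuousAt (hU.mem_nhds hq)).tendsto).mono_left nhdsWithin_le_nhds
  have h2 : Tendsto F (𝓝[s] q) (𝓝 0) := by
    apply Tendsto.congr' _ tendsto_const_nhds
    filter_upwards [self_mem_nhdsWithin] with x hx using (h0 x hx).symm
  exact tendsto_nhds_unique h1 h2

end S14

set_option maxHeartbeats 1000000

/-- With `I = ΛI_ΩΛᵀ`, `(cᵢⱼ) = (1/φ)[[e,f],[f,g]] = Λ(hᵢⱼ)`, and
`Γ̃₂ = (½I_{u₂} + ½A₂)I⁻¹ − (1/φ)[[af, bf],[ag, bg]]` defined on `U ∖ λ_Ω⁻¹(0)`, the map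
`Λ⁻¹(Γ̃₂Λ − Λ_{u₂})` admits a smooth extension to `U` if and only if
`(Λ₍₁₎)_{u₂}·I_Ω·Λ₍₂₎ᵀ − Λ₍₁₎·I_Ω·(Λ₍₂₎)_{u₂}ᵀ + F_{u₂} − G_{u₁}` lies in the principal
ideal `𝔗_Ω` generated by `λ_Ω = det Λ` in `C^∞(U, ℝ)`. -/
theorem statement14 (U : Set (ℝ × ℝ)) (hU : IsOpen U)
    (I IΩ Λ h c : ℝ × ℝ → Matrix (Fin 2) (Fin 2) ℝ)
    (φ a b e f g : ℝ × ℝ → ℝ)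
    (hIs : ∀ i j, ContDiffOn ℝ (⊤ : ℕ∞) (fun u => I u i j) U)
    (hIΩs : ∀ i j, ContDiffOn ℝ (⊤ : ℕ∞) (fun u => IΩ u i j) U)
    (hΛs : ∀ i j, ContDiffOn ℝ (⊤ : ℕ∞) (fun u => Λ u i j) U)
    (hhs : ∀ i j, ContDiffOn ℝ (⊤ : ℕ∞) (fun u => h u i j) U)
    (hcs : ∀ i j, ContDiffOn ℝ (⊤ : ℕ∞) (fun u => c u i j) U)
    (hφs : ContDiffOn ℝ (⊤ : ℕ∞) φ U) (has : ContDiffOn ℝ (⊤ : ℕ∞) a U) (hbs : ContDiffOn ℝ (⊤ : ℕ∞) b U)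
    (hφ0 : ∀ q ∈ U, φ q ≠ 0)
    (hIΩsym : ∀ q ∈ U, (IΩ q)ᵀ = IΩ q)
    (hIΩinv : ∀ q ∈ U, (IΩ q).det ≠ 0)
    (hdense : U ⊆ closure {u ∈ U | (Λ u).det ≠ 0})
    (hI : ∀ q ∈ U, I q = Λ q * IΩ q * (Λ q)ᵀ)
    (hc : ∀ q ∈ U, c q = (φ q)⁻¹ • !![e q, f q; f q, g q])
    (hch : ∀ q ∈ U, c q = Λ q * h q) :
    (∃ D : ℝ × ℝ → Matrix (Fin 2) (Fin 2) ℝ,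
      (∀ i j, ContDiffOn ℝ (⊤ : ℕ∞) (fun u => D u i j) U) ∧
      ∀ q ∈ U, (Λ q).det ≠ 0 →
        D q = (Λ q)⁻¹ *
          (((((2 : ℝ)⁻¹ • pdMat2 I q + (2 : ℝ)⁻¹ •
              !![0, -(pd2 (fun u => I u 0 1) q - pd1 (fun u => I u 1 1) q);
                 pd2 (fun u => I u 0 1) q - pd1 (fun u => I u 1 1) q, 0]) * (I q)⁻¹
            - (φ q)⁻¹ • !![a q * f q, b q * f q; a q * g q, b q * g q]) * Λ q)
          - pdMat2 Λ q)) ↔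
    (∃ ω : ℝ × ℝ → ℝ, ContDiffOn ℝ (⊤ : ℕ∞) ω U ∧
      ∀ q ∈ U,
        (fun j => pd2 (fun u => Λ u 0 j) q) ⬝ᵥ (IΩ q *ᵥ fun j => Λ q 1 j)
          - (fun j => Λ q 0 j) ⬝ᵥ (IΩ q *ᵥ fun j => pd2 (fun u => Λ u 1 j) q)
          + pd2 (fun u => I u 0 1) q - pd1 (fun u => I u 1 1) q
        = ω q * (Λ q).det) := by
  -- entrywise differentiability
  have hΛd : ∀ (i j : Fin 2) (q : ℝ × ℝ), q ∈ U → DifferentiableAt ℝ (fun u => Λ u i j) q :=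
    fun i j q hq => ((hΛs i j).contDiffAt (hU.mem_nhds hq)).differentiableAt (by simp)
  have hIΩd : ∀ (i j : Fin 2) (q : ℝ × ℝ), q ∈ U → DifferentiableAt ℝ (fun u => IΩ u i j) q :=
    fun i j q hq => ((hIΩs i j).contDiffAt (hU.mem_nhds hq)).differentiableAt (by simp)
  -- product rule for the derivative of I = Λ IΩ Λᵀ
  have factA : ∀ q ∈ U, pdMat2 I q
      = pdMat2 Λ q * IΩ q * (Λ q)ᵀ + Λ q * pdMat2 IΩ q * (Λ q)ᵀ
        + Λ q * IΩ q * (pdMat2 Λ q)ᵀ := by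
    intro q hq
    ext i j
    have hev : (fun u => I u i j) =ᶠ[𝓝 q] (fun u =>
        Λ u i 0 * IΩ u 0 0 * Λ u j 0 + Λ u i 0 * IΩ u 0 1 * Λ u j 1
        + Λ u i 1 * IΩ u 1 0 * Λ u j 0 + Λ u i 1 * IΩ u 1 1 * Λ u j 1) := by
      filter_upwards [hU.mem_nhds hq] with u hu
      rw [hI u hu]
      simp [Matrix.mul_apply, Fin.sum_univ_two]
      ring
    have h1 : pdMat2 I q i j = pd2 (fun u => I u i j) q := rfl
    rw [h1, S14.pd2_congr hev, S14.pd2_entry _ _ _ _ _ _ _ _ _ _ _ _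
      (hΛd i 0 q hq) (hIΩd 0 0 q hq) (hΛd j 0 q hq)
      (hΛd i 0 q hq) (hIΩd 0 1 q hq) (hΛd j 1 q hq)
      (hΛd i 1 q hq) (hIΩd 1 0 q hq) (hΛd j 0 q hq)
      (hΛd i 1 q hq) (hIΩd 1 1 q hq) (hΛd j 1 q hq)]
    simp [pdMat2, Matrix.add_apply, Matrix.mul_apply, Matrix.transpose_apply,
      Fin.sum_univ_two]
    ring
  -- the lower order matrix is Λ times a smooth matrix
  have hBH : ∀ q ∈ U, (φ q)⁻¹ • !![a q * f q, b q * f q; a q * g q, b q * g q]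
      = Λ q * !![h q 0 1 * a q, h q 0 1 * b q; h q 1 1 * a q, h q 1 1 * b q] := by
    intro q hq
    have h1 : (φ q)⁻¹ • !![e q, f q; f q, g q] = Λ q * h q := by
      rw [← hc q hq, hch q hq]
    have hf1 : (φ q)⁻¹ * f q = Λ q 0 0 * h q 0 1 + Λ q 0 1 * h q 1 1 := by
      have h2 := congrFun (congrFun h1 0) 1
      simpa [Matrix.mul_apply, Fin.sum_univ_two] using h2
    have hg1 : (φ q)⁻¹ * g q = Λ q 1 0 * h q 0 1 + Λ q 1 1 * h q 1 1 := by
      have h2 := congrFun (congrFun h1 1) 1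
      simpa [Matrix.mul_apply, Fin.sum_univ_two] using h2
    ext i j
    fin_cases i <;> fin_cases j <;>
      simp [Matrix.mul_apply, Fin.sum_univ_two, Matrix.smul_apply, smul_eq_mul]
    · linear_combination a q * hf1
    · linear_combination b q * hf1
    · linear_combination a q * hg1
    · linear_combination b q * hg1
  set Smf : ℝ × ℝ → Matrix (Fin 2) (Fin 2) ℝ :=
    fun q => (2:ℝ)⁻¹ • (pdMat2 IΩ q * (IΩ q)⁻¹)
      - !![h q 0 1 * a q, h q 0 1 * b q; h q 1 1 * a q, h q 1 1 * b q] * Λ q with hSmf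
  set μf : ℝ × ℝ → ℝ := fun q =>
    (fun j => pd2 (fun u => Λ u 0 j) q) ⬝ᵥ (IΩ q *ᵥ fun j => Λ q 1 j)
      - (fun j => Λ q 0 j) ⬝ᵥ (IΩ q *ᵥ fun j => pd2 (fun u => Λ u 1 j) q)
      + pd2 (fun u => I u 0 1) q - pd1 (fun u => I u 1 1) q with hμf
  -- the key pointwise identity on the set where Λ is invertible
  have key : ∀ q ∈ U, (Λ q).det ≠ 0 →
      (Λ q)⁻¹ *
          (((((2 : ℝ)⁻¹ • pdMat2 I q + (2 : ℝ)⁻¹ •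
              !![0, -(pd2 (fun u => I u 0 1) q - pd1 (fun u => I u 1 1) q);
                 pd2 (fun u => I u 0 1) q - pd1 (fun u => I u 1 1) q, 0]) * (I q)⁻¹
            - (φ q)⁻¹ • !![a q * f q, b q * f q; a q * g q, b q * g q]) * Λ q)
          - pdMat2 Λ q)
      = (μf q / (2 * (Λ q).det)) • (S14.Jm * (IΩ q)⁻¹) + Smf q := by
    intro q hq hLd
    have hWs : (IΩ q)ᵀ = IΩ q := hIΩsym q hq
    have hWd : (IΩ q).det ≠ 0 := hIΩinv q hq
    have hsym : IΩ q 1 0 = IΩ q 0 1 := by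
      have h2 := congrFun (congrFun hWs 0) 1
      simpa using h2
    have hA2 : !![0, -(pd2 (fun u => I u 0 1) q - pd1 (fun u => I u 1 1) q);
                 pd2 (fun u => I u 0 1) q - pd1 (fun u => I u 1 1) q, 0]
        = (pd2 (fun u => I u 0 1) q - pd1 (fun u => I u 1 1) q) • S14.Jm := by
      ext i j
      fin_cases i <;> fin_cases j <;> simp [S14.Jm]
    rw [factA q hq, hI q hq, hBH q hq, hA2,
      S14.coreM (Λ q) (pdMat2 Λ q) (IΩ q) (pdMat2 IΩ q)
        (!![h q 0 1 * a q, h q 0 1 * b q; h q 1 1 * a q, h q 1 1 * b q])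
        (pd2 (fun u => I u 0 1) q - pd1 (fun u => I u 1 1) q) hWs hLd hWd]
    have hdet2 : (Λ q).det = Λ q 0 0 * Λ q 1 1 - Λ q 0 1 * Λ q 1 0 := Matrix.det_fin_two _
    have hLd' : Λ q 0 0 * Λ q 1 1 - Λ q 0 1 * Λ q 1 0 ≠ 0 := hdet2 ▸ hLd
    have hc12 : (2:ℝ)⁻¹ * (((Λ q)⁻¹ * pdMat2 Λ q * IΩ q) 0 1
          - ((Λ q)⁻¹ * pdMat2 Λ q * IΩ q) 1 0)
        + 2⁻¹ * (pd2 (fun u => I u 0 1) q - pd1 (fun u => I u 1 1) q) * ((Λ q).det)⁻¹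
        = μf q / (2 * (Λ q).det) := by
      have hinv : (Λ q)⁻¹ = ((Λ q).det)⁻¹ • !![Λ q 1 1, -(Λ q 0 1); -(Λ q 1 0), Λ q 0 0] := by
        rw [Matrix.inv_def, Matrix.adjugate_fin_two, Ring.inverse_eq_inv']
      simp only [hμf]
      rw [hinv]
      simp [Matrix.mul_apply, Fin.sum_univ_two, Matrix.smul_apply, smul_eq_mul,
        dotProduct, Matrix.mulVec, pdMat2, Matrix.of_apply, Matrix.vecHead, Matrix.vecTail,
        hsym]
      field_simp
      ring
    rw [hc12]
    simp only [hSmf]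
    abel
  -- smoothness of auxiliary data
  have hdetΛs : ContDiffOn ℝ (⊤ : ℕ∞) (fun q => (Λ q).det) U := by
    simp only [Matrix.det_fin_two]
    exact ((hΛs 0 0).mul (hΛs 1 1)).sub ((hΛs 0 1).mul (hΛs 1 0))
  have hdetWs : ContDiffOn ℝ (⊤ : ℕ∞) (fun q => (IΩ q).det) U := by
    simp only [Matrix.det_fin_two]
    exact ((hIΩs 0 0).mul (hIΩs 1 1)).sub ((hIΩs 0 1).mul (hIΩs 1 0))
  have hinvW : ∀ i j, ContDiffOn ℝ (⊤ : ℕ∞) (fun q => (IΩ q)⁻¹ i j) U := by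
    intro i j
    have hrw : (fun q => (IΩ q)⁻¹ i j)
        = fun q => ((IΩ q).det)⁻¹
            * (!![IΩ q 1 1, -(IΩ q 0 1); -(IΩ q 1 0), IΩ q 0 0] i j) := by
      funext q
      rw [Matrix.inv_def, Matrix.adjugate_fin_two, Ring.inverse_eq_inv']
      simp
    rw [hrw]
    refine (hdetWs.inv hIΩinv).mul ?_
    fin_cases i <;> fin_cases j <;> simp
    · exact hIΩs 1 1
    · exact (hIΩs 0 1).neg
    · exact (hIΩs 1 0).neg
    · exact hIΩs 0 0
  have hS00 : ContDiffOn ℝ (⊤ : ℕ∞) (fun q => Smf q 0 0) U := by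
    have hrw : (fun q => Smf q 0 0) = fun q =>
        (2:ℝ)⁻¹ * (pd2 (fun u => IΩ u 0 0) q * (IΩ q)⁻¹ 0 0
          + pd2 (fun u => IΩ u 0 1) q * (IΩ q)⁻¹ 1 0)
        - (h q 0 1 * a q * Λ q 0 0 + h q 0 1 * b q * Λ q 1 0) := by
      funext q
      simp [hSmf, Matrix.mul_apply, Matrix.vecMul, dotProduct, Fin.sum_univ_two, pdMat2,
        Matrix.sub_apply, Matrix.smul_apply, smul_eq_mul]
    rw [hrw]
    exact (contDiffOn_const.mul (((S14.contDiffOn_pd2 hU (hIΩs 0 0)).mul (hinvW 0 0)).add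
      ((S14.contDiffOn_pd2 hU (hIΩs 0 1)).mul (hinvW 1 0)))).sub
      (((((hhs 0 1).mul has).mul (hΛs 0 0))).add ((((hhs 0 1).mul hbs).mul (hΛs 1 0))))
  have hS01 : ContDiffOn ℝ (⊤ : ℕ∞) (fun q => Smf q 0 1) U := by
    have hrw : (fun q => Smf q 0 1) = fun q =>
        (2:ℝ)⁻¹ * (pd2 (fun u => IΩ u 0 0) q * (IΩ q)⁻¹ 0 1
          + pd2 (fun u => IΩ u 0 1) q * (IΩ q)⁻¹ 1 1)
        - (h q 0 1 * a q * Λ q 0 1 + h q 0 1 * b q * Λ q 1 1) := by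
      funext q
      simp [hSmf, Matrix.mul_apply, Matrix.vecMul, dotProduct, Fin.sum_univ_two, pdMat2,
        Matrix.sub_apply, Matrix.smul_apply, smul_eq_mul]
    rw [hrw]
    exact (contDiffOn_const.mul (((S14.contDiffOn_pd2 hU (hIΩs 0 0)).mul (hinvW 0 1)).add
      ((S14.contDiffOn_pd2 hU (hIΩs 0 1)).mul (hinvW 1 1)))).sub
      (((((hhs 0 1).mul has).mul (hΛs 0 1))).add ((((hhs 0 1).mul hbs).mul (hΛs 1 1))))
  have hS10 : ContDiffOn ℝ (⊤ : ℕ∞) (fun q => Smf q 1 0) U := by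
    have hrw : (fun q => Smf q 1 0) = fun q =>
        (2:ℝ)⁻¹ * (pd2 (fun u => IΩ u 1 0) q * (IΩ q)⁻¹ 0 0
          + pd2 (fun u => IΩ u 1 1) q * (IΩ q)⁻¹ 1 0)
        - (h q 1 1 * a q * Λ q 0 0 + h q 1 1 * b q * Λ q 1 0) := by
      funext q
      simp [hSmf, Matrix.mul_apply, Matrix.vecMul, dotProduct, Fin.sum_univ_two, pdMat2,
        Matrix.sub_apply, Matrix.smul_apply, smul_eq_mul]
    rw [hrw]
    exact (contDiffOn_const.mul (((S14.contDiffOn_pd2 hU (hIΩs 1 0)).mul (hinvW 0 0)).add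
      ((S14.contDiffOn_pd2 hU (hIΩs 1 1)).mul (hinvW 1 0)))).sub
      (((((hhs 1 1).mul has).mul (hΛs 0 0))).add ((((hhs 1 1).mul hbs).mul (hΛs 1 0))))
  have hS11 : ContDiffOn ℝ (⊤ : ℕ∞) (fun q => Smf q 1 1) U := by
    have hrw : (fun q => Smf q 1 1) = fun q =>
        (2:ℝ)⁻¹ * (pd2 (fun u => IΩ u 1 0) q * (IΩ q)⁻¹ 0 1
          + pd2 (fun u => IΩ u 1 1) q * (IΩ q)⁻¹ 1 1)
        - (h q 1 1 * a q * Λ q 0 1 + h q 1 1 * b q * Λ q 1 1) := by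
      funext q
      simp [hSmf, Matrix.mul_apply, Matrix.vecMul, dotProduct, Fin.sum_univ_two, pdMat2,
        Matrix.sub_apply, Matrix.smul_apply, smul_eq_mul]
    rw [hrw]
    exact (contDiffOn_const.mul (((S14.contDiffOn_pd2 hU (hIΩs 1 0)).mul (hinvW 0 1)).add
      ((S14.contDiffOn_pd2 hU (hIΩs 1 1)).mul (hinvW 1 1)))).sub
      (((((hhs 1 1).mul has).mul (hΛs 0 1))).add ((((hhs 1 1).mul hbs).mul (hΛs 1 1))))
  have hSmE : ∀ i j, ContDiffOn ℝ (⊤ : ℕ∞) (fun q => Smf q i j) U := by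
    intro i j
    fin_cases i <;> fin_cases j
    · exact hS00
    · exact hS01
    · exact hS10
    · exact hS11
  have hμs : ContDiffOn ℝ (⊤ : ℕ∞) μf U := by
    have hrw : μf = fun q =>
        (pd2 (fun u => Λ u 0 0) q * (IΩ q 0 0 * Λ q 1 0 + IΩ q 0 1 * Λ q 1 1)
          + pd2 (fun u => Λ u 0 1) q * (IΩ q 1 0 * Λ q 1 0 + IΩ q 1 1 * Λ q 1 1))
        - (Λ q 0 0 * (IΩ q 0 0 * pd2 (fun u => Λ u 1 0) q + IΩ q 0 1 * pd2 (fun u => Λ u 1 1) q)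
          + Λ q 0 1 * (IΩ q 1 0 * pd2 (fun u => Λ u 1 0) q
              + IΩ q 1 1 * pd2 (fun u => Λ u 1 1) q))
        + pd2 (fun u => I u 0 1) q - pd1 (fun u => I u 1 1) q := by
      funext q
      simp [hμf, dotProduct, Matrix.mulVec, Fin.sum_univ_two]
    rw [hrw]
    exact (((((S14.contDiffOn_pd2 hU (hΛs 0 0)).mul
      (((hIΩs 0 0).mul (hΛs 1 0)).add ((hIΩs 0 1).mul (hΛs 1 1)))).add
      ((S14.contDiffOn_pd2 hU (hΛs 0 1)).mul
        (((hIΩs 1 0).mul (hΛs 1 0)).add ((hIΩs 1 1).mul (hΛs 1 1))))).sub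
      (((hΛs 0 0).mul (((hIΩs 0 0).mul (S14.contDiffOn_pd2 hU (hΛs 1 0))).add
        ((hIΩs 0 1).mul (S14.contDiffOn_pd2 hU (hΛs 1 1))))).add
      ((hΛs 0 1).mul (((hIΩs 1 0).mul (S14.contDiffOn_pd2 hU (hΛs 1 0))).add
        ((hIΩs 1 1).mul (S14.contDiffOn_pd2 hU (hΛs 1 1))))))).add
      (S14.contDiffOn_pd2 hU (hIs 0 1))).sub (S14.contDiffOn_pd1 hU (hIs 1 1))
  constructor
  · rintro ⟨D, hDs, hDeq⟩
    refine ⟨fun q => 2 * ((D q 0 0 - Smf q 0 0) * (-(IΩ q 0 1))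
        + (D q 0 1 - Smf q 0 1) * (-(IΩ q 1 1))), ?_, ?_⟩
    · exact contDiffOn_const.mul
        ((((hDs 0 0).sub (hSmE 0 0)).mul ((hIΩs 0 1).neg)).add
         (((hDs 0 1).sub (hSmE 0 1)).mul ((hIΩs 1 1).neg)))
    · intro q hq
      have hzero : ∀ p ∈ {u ∈ U | (Λ u).det ≠ 0},
          μf p - (2 * ((D p 0 0 - Smf p 0 0) * (-(IΩ p 0 1))
            + (D p 0 1 - Smf p 0 1) * (-(IΩ p 1 1)))) * (Λ p).det = 0 := by
        rintro p ⟨hpU, hpd⟩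
        have hD := hDeq p hpU hpd
        rw [key p hpU hpd] at hD
        have e00 : D p 0 0 = (μf p / (2 * (Λ p).det))
            * ((S14.Jm * (IΩ p)⁻¹) 0 0) + Smf p 0 0 := by
          have h2 := congrFun (congrFun hD 0) 0
          simpa [Matrix.add_apply, Matrix.smul_apply, smul_eq_mul] using h2
        have e01 : D p 0 1 = (μf p / (2 * (Λ p).det))
            * ((S14.Jm * (IΩ p)⁻¹) 0 1) + Smf p 0 1 := by
          have h2 := congrFun (congrFun hD 0) 1
          simpa [Matrix.add_apply, Matrix.smul_apply, smul_eq_mul] using h2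
        have hWd : (IΩ p).det ≠ 0 := hIΩinv p hpU
        have hWd' : IΩ p 0 0 * IΩ p 1 1 - IΩ p 0 1 * IΩ p 1 0 ≠ 0 := by
          rw [Matrix.det_fin_two] at hWd
          exact hWd
        have hiW : (IΩ p)⁻¹ = ((IΩ p).det)⁻¹
            • !![IΩ p 1 1, -(IΩ p 0 1); -(IΩ p 1 0), IΩ p 0 0] := by
          rw [Matrix.inv_def, Matrix.adjugate_fin_two, Ring.inverse_eq_inv']
        have hX00 : (S14.Jm * (IΩ p)⁻¹) 0 0 = ((IΩ p).det)⁻¹ * IΩ p 1 0 := by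
          rw [hiW]
          simp [S14.Jm, Matrix.mul_apply, Fin.sum_univ_two]
        have hX01 : (S14.Jm * (IΩ p)⁻¹) 0 1 = -(((IΩ p).det)⁻¹ * IΩ p 0 0) := by
          rw [hiW]
          simp [S14.Jm, Matrix.mul_apply, Fin.sum_univ_two]
        have hdW : (IΩ p).det = IΩ p 0 0 * IΩ p 1 1 - IΩ p 0 1 * IΩ p 1 0 :=
          Matrix.det_fin_two _
        rw [e00, e01, hX00, hX01, hdW]
        field_simp
        ring
      have h5 := S14.eq_zero_of_dense hU
        ((hμs.sub (((contDiffOn_const.mul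
          ((((hDs 0 0).sub (hSmE 0 0)).mul ((hIΩs 0 1).neg)).add
           (((hDs 0 1).sub (hSmE 0 1)).mul ((hIΩs 1 1).neg))))).mul hdetΛs)).continuousOn)
        hzero hdense hq
      have h6 := sub_eq_zero.mp h5
      simp only [hμf] at h6
      exact h6
  · rintro ⟨ω, hωs, hω⟩
    refine ⟨fun q => (ω q * (2:ℝ)⁻¹) • (S14.Jm * (IΩ q)⁻¹) + Smf q, ?_, ?_⟩
    · intro i j
      have hrw : (fun q => ((ω q * (2:ℝ)⁻¹) • (S14.Jm * (IΩ q)⁻¹) + Smf q) i j)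
          = fun q => (ω q * (2:ℝ)⁻¹) * (S14.Jm i 0 * (IΩ q)⁻¹ 0 j
              + S14.Jm i 1 * (IΩ q)⁻¹ 1 j) + Smf q i j := by
        funext q
        simp [Matrix.add_apply, Matrix.smul_apply, smul_eq_mul, Matrix.mul_apply,
          Fin.sum_univ_two]
      rw [hrw]
      exact ((hωs.mul contDiffOn_const).mul
        ((contDiffOn_const.mul (hinvW 0 j)).add
          (contDiffOn_const.mul (hinvW 1 j)))).add (hSmE i j)
    · intro q hq hLd
      rw [key q hq hLd]
      have hμω : μf q = ω q * (Λ q).det := by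
        have h2 := hω q hq
        simp only [hμf]
        exact h2
      have hcoef : ω q * (2:ℝ)⁻¹ = μf q / (2 * (Λ q).det) := by
        rw [hμω]
        field_simp
      show (ω q * (2:ℝ)⁻¹) • (S14.Jm * (IΩ q)⁻¹) + Smf q = _
      rw [hcoef]


end
end

section
/- Under the stated hypotheses, the integrability condition ∂_{u₂}(λ₁₁w₁ + λ₁₂w₂) = ∂_{u₁}(λ₂₁w₁ + λ₂₂w₂) holds at every point of U (so that for any q ∈ U and p ∈ ℝ³ the system x_{u₁} = λ₁₁w₁ + λ₁₂w₂, x_{u₂} = λ₂₁w₁ + λ₂₂w₂, x(q) = p is locally solvable) if and only if both of the following hold on U: (i) Λ·(hᵢⱼ) is a symmetric matrix, i.e. λ₁₁h₁₂ + λ₁₂h₂₂ = λ₂₁h₁₁ + λ₂₂h₂₁; and (ii) the second row of Λ𝒟₁ + Λ_{u₁} equals the first row of Λ𝒟₂ + Λ_{u₂}. -/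
open Matrix Topology Filter

noncomputable section

/-- Auxiliary: product rule for a combination `a • f + b • g` in a given direction. -/
lemma pd_combo_aux {a b : ℝ × ℝ → ℝ} {f g : ℝ × ℝ → V3} {q : ℝ × ℝ} (v : ℝ × ℝ)
    (ha : DifferentiableAt ℝ a q) (hb : DifferentiableAt ℝ b q)
    (hf : DifferentiableAt ℝ f q) (hg : DifferentiableAt ℝ g q) :
    fderiv ℝ (fun u => a u • f u + b u • g u) q v
      = (fderiv ℝ a q v) • f q + a q • (fderiv ℝ f q v)
        + ((fderiv ℝ b q v) • g q + b q • (fderiv ℝ g q v)) := by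
  rw [fderiv_fun_add (f := fun u => a u • f u) (g := fun u => b u • g u) (ha.smul hf) (hb.smul hg), fderiv_fun_smul ha hf, fderiv_fun_smul hb hg]
  simp only [ContinuousLinearMap.add_apply, ContinuousLinearMap.smul_apply,
    ContinuousLinearMap.smulRight_apply]
  abel

/-- Auxiliary: comparing coefficients w.r.t. a linearly independent triple. -/
lemma li_coeff {w1 w2 ξ : V3} (h : LinearIndependent ℝ ![w1, w2, ξ])
    {a1 a2 a3 b1 b2 b3 : ℝ} :
    a1 • w1 + a2 • w2 + a3 • ξ = b1 • w1 + b2 • w2 + b3 • ξ ↔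
      a1 = b1 ∧ a2 = b2 ∧ a3 = b3 := by
  constructor
  · intro he
    have h0 : (a1 - b1) • w1 + (a2 - b2) • w2 + (a3 - b3) • ξ = 0 := by
      have hs : (a1 • w1 + a2 • w2 + a3 • ξ) - (b1 • w1 + b2 • w2 + b3 • ξ) = 0 :=
        sub_eq_zero_of_eq he
      rw [← hs]; module
    have hli := Fintype.linearIndependent_iff.mp h ![a1 - b1, a2 - b2, a3 - b3]
      (by simpa [Fin.sum_univ_three] using h0)
    have h1 := hli 0; have h2 := hli 1; have h3 := hli 2
    simp only [Matrix.cons_val_zero, Matrix.cons_val_one, Matrix.head_cons,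
      Matrix.cons_val_two, Matrix.tail_cons, sub_eq_zero] at h1 h2 h3
    exact ⟨h1, h2, h3⟩
  · rintro ⟨rfl, rfl, rfl⟩; rfl

/-- Integrability of the system `x_{u₁} = λ₁₁w₁ + λ₁₂w₂`,
`x_{u₂} = λ₂₁w₁ + λ₂₂w₂` holds at every point of `U` if and only if `Λ(hᵢⱼ)` is
symmetric and the second row of `Λ𝒟₁ + Λ_{u₁}` equals the first row of
`Λ𝒟₂ + Λ_{u₂}` on `U`. -/
theorem statement15 (U : Set (ℝ × ℝ)) (hU : IsOpen U)
    (w1 w2 ξ : ℝ × ℝ → V3)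
    (hw1s : ContDiffOn ℝ (⊤ : ℕ∞) w1 U) (hw2s : ContDiffOn ℝ (⊤ : ℕ∞) w2 U)
    (hξs : ContDiffOn ℝ (⊤ : ℕ∞) ξ U)
    (hW : ∀ q ∈ U, LinearIndependent ℝ ![w1 q, w2 q, ξ q])
    (D111 D211 D112 D212 D121 D221 D122 D222
      h11 h12 h21 h22 S11 S12 S21 S22 l11 l12 l21 l22 : ℝ × ℝ → ℝ)
    (hsm : ∀ ψ ∈ [D111, D211, D112, D212, D121, D221, D122, D222,
      h11, h12, h21, h22, S11, S12, S21, S22, l11, l12, l21, l22],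
      ContDiffOn ℝ (⊤ : ℕ∞) ψ U)
    (hw1u1 : ∀ q ∈ U, pd1 w1 q = D111 q • w1 q + D211 q • w2 q + h11 q • ξ q)
    (hw1u2 : ∀ q ∈ U, pd2 w1 q = D112 q • w1 q + D212 q • w2 q + h12 q • ξ q)
    (hw2u1 : ∀ q ∈ U, pd1 w2 q = D121 q • w1 q + D221 q • w2 q + h21 q • ξ q)
    (hw2u2 : ∀ q ∈ U, pd2 w2 q = D122 q • w1 q + D222 q • w2 q + h22 q • ξ q)
    (hξu1 : ∀ q ∈ U, pd1 ξ q = -(S11 q) • w1 q - S12 q • w2 q)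
    (hξu2 : ∀ q ∈ U, pd2 ξ q = -(S21 q) • w1 q - S22 q • w2 q) :
    (∀ q ∈ U,
      pd2 (fun u => l11 u • w1 u + l12 u • w2 u) q
        = pd1 (fun u => l21 u • w1 u + l22 u • w2 u) q) ↔
    ((∀ q ∈ U,
        l11 q * h12 q + l12 q * h22 q = l21 q * h11 q + l22 q * h21 q) ∧
     (∀ q ∈ U,
        (!![l11 q, l12 q; l21 q, l22 q] * !![D111 q, D211 q; D121 q, D221 q]
          + pdMat1 (fun u => !![l11 u, l12 u; l21 u, l22 u]) q) 1
        = (!![l11 q, l12 q; l21 q, l22 q] * !![D112 q, D212 q; D122 q, D222 q]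
          + pdMat2 (fun u => !![l11 u, l12 u; l21 u, l22 u]) q) 0)) := by
  have key : ∀ q ∈ U,
      (pd2 (fun u => l11 u • w1 u + l12 u • w2 u) q
        = pd1 (fun u => l21 u • w1 u + l22 u • w2 u) q) ↔
      ((l11 q * h12 q + l12 q * h22 q = l21 q * h11 q + l22 q * h21 q) ∧
       ((!![l11 q, l12 q; l21 q, l22 q] * !![D111 q, D211 q; D121 q, D221 q]
          + pdMat1 (fun u => !![l11 u, l12 u; l21 u, l22 u]) q) 1
        = (!![l11 q, l12 q; l21 q, l22 q] * !![D112 q, D212 q; D122 q, D222 q]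
          + pdMat2 (fun u => !![l11 u, l12 u; l21 u, l22 u]) q) 0)) := by
    intro q hq
    have hnh : U ∈ 𝓝 q := hU.mem_nhds hq
    have diffAt : ∀ ψ : ℝ × ℝ → ℝ, ContDiffOn ℝ (⊤ : ℕ∞) ψ U → DifferentiableAt ℝ ψ q :=
      fun ψ hψ => ((hψ.contDiffAt hnh).differentiableAt (by simp))
    have dl11 := diffAt l11 (hsm l11 (by simp))
    have dl12 := diffAt l12 (hsm l12 (by simp))
    have dl21 := diffAt l21 (hsm l21 (by simp))
    have dl22 := diffAt l22 (hsm l22 (by simp))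
    have dw1 : DifferentiableAt ℝ w1 q := (hw1s.contDiffAt hnh).differentiableAt (by simp)
    have dw2 : DifferentiableAt ℝ w2 q := (hw2s.contDiffAt hnh).differentiableAt (by simp)
    have hL : pd2 (fun u => l11 u • w1 u + l12 u • w2 u) q
        = pd2 l11 q • w1 q + l11 q • pd2 w1 q + (pd2 l12 q • w2 q + l12 q • pd2 w2 q) :=
      pd_combo_aux (0, 1) dl11 dl12 dw1 dw2
    have hR : pd1 (fun u => l21 u • w1 u + l22 u • w2 u) q
        = pd1 l21 q • w1 q + l21 q • pd1 w1 q + (pd1 l22 q • w2 q + l22 q • pd1 w2 q) :=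
      pd_combo_aux (1, 0) dl21 dl22 dw1 dw2
    have hLc : pd2 (fun u => l11 u • w1 u + l12 u • w2 u) q
        = (pd2 l11 q + (l11 q * D112 q + l12 q * D122 q)) • w1 q
          + (pd2 l12 q + (l11 q * D212 q + l12 q * D222 q)) • w2 q
          + (l11 q * h12 q + l12 q * h22 q) • ξ q := by
      rw [hL, hw1u2 q hq, hw2u2 q hq]; module
    have hRc : pd1 (fun u => l21 u • w1 u + l22 u • w2 u) q
        = (pd1 l21 q + (l21 q * D111 q + l22 q * D121 q)) • w1 q
          + (pd1 l22 q + (l21 q * D211 q + l22 q * D221 q)) • w2 q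
          + (l21 q * h11 q + l22 q * h21 q) • ξ q := by
      rw [hR, hw1u1 q hq, hw2u1 q hq]; module
    rw [hLc, hRc, li_coeff (hW q hq)]
    have hrow : ((!![l11 q, l12 q; l21 q, l22 q] * !![D111 q, D211 q; D121 q, D221 q]
          + pdMat1 (fun u => !![l11 u, l12 u; l21 u, l22 u]) q) 1
        = (!![l11 q, l12 q; l21 q, l22 q] * !![D112 q, D212 q; D122 q, D222 q]
          + pdMat2 (fun u => !![l11 u, l12 u; l21 u, l22 u]) q) 0) ↔
        ((l21 q * D111 q + l22 q * D121 q + pd1 l21 q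
            = l11 q * D112 q + l12 q * D122 q + pd2 l11 q) ∧
         (l21 q * D211 q + l22 q * D221 q + pd1 l22 q
            = l11 q * D212 q + l12 q * D222 q + pd2 l12 q)) := by
      rw [funext_iff, Fin.forall_fin_two]
      simp [pdMat1, pdMat2, Matrix.mul_apply, Fin.sum_univ_two, pd1, pd2]
    rw [hrow]
    constructor
    · rintro ⟨h1, h2, h3⟩
      exact ⟨h3, by linarith, by linarith⟩
    · rintro ⟨h3, h1, h2⟩
      exact ⟨by linarith, by linarith, h3⟩
  constructor
  · intro h
    exact ⟨fun q hq => ((key q hq).mp (h q hq)).1, fun q hq => ((key q hq).mp (h q hq)).2⟩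
  · intro h q hq
    exact (key q hq).mpr ⟨h.1 q hq, h.2 q hq⟩

end
end

section
/- Let U ⊆ ℝ² be open and connected. Let x, x̃: U → ℝ³ be proper frontals with tangent moving bases Ω = (w₁ w₂) and Ω̃ = (w̃₁ w̃₂) respectively and with the same matrix Λ, i.e. Dx = ΩΛᵀ and Dx̃ = Ω̃Λᵀ; let ξ and ξ̃ be equiaffine transversal vector fields of x and x̃ respectively, and suppose both triples satisfy the structure equations with the same smooth coefficient functions: (wᵢ)_{uⱼ} = 𝒟¹ᵢⱼw₁ + 𝒟²ᵢⱼw₂ + hᵢⱼξ, ξ_{uⱼ} = −Sⱼ¹w₁ − Sⱼ²w₂, and (w̃ᵢ)_{uⱼ} = 𝒟¹ᵢⱼw̃₁ + 𝒟²ᵢⱼw̃₂ + hᵢⱼξ̃, ξ̃_{uⱼ} = −Sⱼ¹w̃₁ − Sⱼ²w̃₂, for the same functions 𝒟ᵏᵢⱼ, hᵢⱼ, Sⱼᵏ ∈ C^∞(U,ℝ). Then x and x̃ are affinely equivalent: there exist a linear isomorphism L: ℝ³ → ℝ³ and a constant vector a ∈ ℝ³ with x̃ = L∘x + a. -/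
open Matrix Topology Filter

noncomputable section

namespace S17aux

abbrev CLM3 : Type := V3 →L[ℝ] V3

def psiFun (t : V3 × V3 × V3) : V3 →ₗ[ℝ] V3 where
  toFun v := v 0 • t.1 + v 1 • t.2.1 + v 2 • t.2.2
  map_add' u v := by
    simp only [Pi.add_apply, add_smul]; abel
  map_smul' c v := by
    simp only [Pi.smul_apply, smul_eq_mul, RingHom.id_apply, smul_smul, smul_add]

def Psi : (V3 × V3 × V3) →L[ℝ] CLM3 :=
  LinearMap.toContinuousLinearMap
  { toFun := fun t => LinearMap.toContinuousLinearMap (psiFun t)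
    map_add' := by
      intro s t; ext v; simp [psiFun, smul_add]; abel
    map_smul' := by
      intro c t; ext v; simp [psiFun, smul_smul, smul_add]; ring }

@[simp] lemma Psi_apply (t : V3 × V3 × V3) (v : V3) :
    Psi t v = v 0 • t.1 + v 1 • t.2.1 + v 2 • t.2.2 := rfl


lemma clm_ext2 {E : Type*} [NormedAddCommGroup E] [NormedSpace ℝ E]
    {f g : (ℝ × ℝ) →L[ℝ] E} (h1 : f (1, 0) = g (1, 0)) (h2 : f (0, 1) = g (0, 1)) :
    f = g := by
  refine ContinuousLinearMap.ext fun v => ?_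
  have hv : (v : ℝ × ℝ) = v.1 • ((1 : ℝ), (0 : ℝ)) + v.2 • ((0 : ℝ), (1 : ℝ)) := by
    simp [Prod.ext_iff]
  rw [hv, map_add, map_add, _root_.map_smul, _root_.map_smul, _root_.map_smul, _root_.map_smul, h1, h2]

lemma const_of_zero_deriv {E : Type*} [NormedAddCommGroup E] [NormedSpace ℝ E]
    {s : Set (ℝ × ℝ)} (hs : IsOpen s) (hc : IsPreconnected s) {f : ℝ × ℝ → E}
    (hd : ∀ q ∈ s, HasFDerivAt f (0 : (ℝ × ℝ) →L[ℝ] E) q) :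
    ∀ p ∈ s, ∀ q ∈ s, f p = f q := by
  have loc : ∀ z ∈ s, ∃ r > 0, Metric.ball z r ⊆ s ∧
      ∀ y ∈ Metric.ball z r, f y = f z := by
    intro z hz
    obtain ⟨r, hr, hball⟩ := Metric.isOpen_iff.1 hs z hz
    refine ⟨r, hr, hball, fun y hy => ?_⟩
    refine (convex_ball z r).is_const_of_fderivWithin_eq_zero
      (fun w hw => ((hd w (hball hw)).differentiableAt).differentiableWithinAt)
      (fun w hw => ?_) hy (Metric.mem_ball_self hr)
    rw [fderivWithin_of_isOpen Metric.isOpen_ball hw, (hd w (hball hw)).fderiv]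
  intro p hp q hq
  set v := {y ∈ s | f y = f p} with hv
  have hvopen : IsOpen v := by
    rw [Metric.isOpen_iff]
    rintro y ⟨hy1, hy2⟩
    obtain ⟨r, hr, hball, hconst⟩ := loc y hy1
    exact ⟨r, hr, fun z hz => ⟨hball hz, (hconst z hz).trans hy2⟩⟩
  have hsub : s ⊆ v := by
    refine hc.subset_of_closure_inter_subset hvopen ⟨p, hp, hp, rfl⟩ ?_
    rintro z ⟨hzc, hzs⟩
    obtain ⟨r, hr, hball, hconst⟩ := loc z hzs
    obtain ⟨y, hyv, hyd⟩ := Metric.mem_closure_iff.1 hzc r hr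
    have hyb : y ∈ Metric.ball z r := by
      rwa [Metric.mem_ball, dist_comm]
    exact ⟨hzs, ((hconst y hyb).symm.trans hyv.2)⟩
  exact ((hsub hq).2).symm

lemma exists_unit {a b c : V3} (h2 : LinearIndependent ℝ ![a, b])
    (hc : c ∉ Submodule.span ℝ {a, b}) :
    ∃ u : (V3 →L[ℝ] V3)ˣ, (u : V3 →L[ℝ] V3) = Psi (a, b, c) := by
  have hsnoc : ![a, b, c] = Fin.snoc ![a, b] c := by
    funext i
    fin_cases i <;> rfl
  have hrange : Submodule.span ℝ (Set.range ![a, b]) = Submodule.span ℝ {a, b} := by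
    congr 1
    ext x
    simp [Matrix.range_cons, Matrix.range_empty]
    tauto
  have hli : LinearIndependent ℝ ![a, b, c] := by
    rw [hsnoc, linearIndependent_fin_snoc]
    exact ⟨h2, by rwa [hrange]⟩
  have hcard : Fintype.card (Fin 3) = Module.finrank ℝ V3 := by simp
  let B : Module.Basis (Fin 3) ℝ V3 := basisOfLinearIndependentOfCardEqFinrank hli hcard
  have hB : ∀ i, B i = ![a, b, c] i := fun i => by
    rw [show B = _ from rfl, coe_basisOfLinearIndependentOfCardEqFinrank]
  have key : ∀ v, Psi (a, b, c) v = B.equivFun.symm v := by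
    intro v
    rw [Module.Basis.equivFun_symm_apply, Fin.sum_univ_three, hB 0, hB 1, hB 2]
    simp
  let E : V3 ≃L[ℝ] V3 := B.equivFun.symm.toContinuousLinearEquiv
  refine ⟨E.toUnit, ?_⟩
  ext v
  rw [key v]
  rfl

lemma comp_eq (a b c pa pb pc : V3) (d1 d2 hh e1 e2 k s1 s2 : ℝ)
    (ha : pa = d1 • a + d2 • b + hh • c)
    (hb : pb = e1 • a + e2 • b + k • c)
    (hcc : pc = (-s1) • a - s2 • b) :
    Psi (pa, pb, pc) =
      Psi (a, b, c) * Psi (![d1, d2, hh], ![e1, e2, k], ![-s1, -s2, 0]) := by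
  ext v i
  simp [ContinuousLinearMap.mul_apply, ha, hb, hcc]
  ring


lemma cancel_aux {R : Type*} [Ring R] (gt g c ai : R) (h : ai * g = 1) :
    gt * -(ai * (g * c) * ai) + gt * c * ai = 0 := by
  rw [← mul_assoc ai, h, one_mul]
  noncomm_ring

end S17aux

set_option maxHeartbeats 2000000 in
/-- Rigidity part of the fundamental theorem. Two proper frontals on a
connected open set, with tangent moving bases and equiaffine transversal fields
satisfying the same structure equations (same `Λ`, `𝒟ᵏᵢⱼ`, `hᵢⱼ`, `Sⱼᵏ`), are affinely
equivalent: `x̃ = L∘x + a` for a linear isomorphism `L` and a constant vector `a`. -/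
theorem statement17 (U : Set (ℝ × ℝ)) (hU : IsOpen U) (hconn : IsConnected U)
    (x xt w1 w2 w1t w2t ξ ξt : ℝ × ℝ → V3)
    (Λ : ℝ × ℝ → Matrix (Fin 2) (Fin 2) ℝ)
    (hx : ContDiffOn ℝ (⊤ : ℕ∞) x U) (hxt : ContDiffOn ℝ (⊤ : ℕ∞) xt U)
    (hΩ : IsTMB x w1 w2 U) (hΩt : IsTMB xt w1t w2t U)
    (hpr : IsProper x U) (hprt : IsProper xt U)
    (hΛs : ∀ i j, ContDiffOn ℝ (⊤ : ℕ∞) (fun u => Λ u i j) U)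
    (hDx : ∀ q ∈ U,
      pd1 x q = Λ q 0 0 • w1 q + Λ q 0 1 • w2 q ∧
      pd2 x q = Λ q 1 0 • w1 q + Λ q 1 1 • w2 q)
    (hDxt : ∀ q ∈ U,
      pd1 xt q = Λ q 0 0 • w1t q + Λ q 0 1 • w2t q ∧
      pd2 xt q = Λ q 1 0 • w1t q + Λ q 1 1 • w2t q)
    (hξs : ContDiffOn ℝ (⊤ : ℕ∞) ξ U) (hξts : ContDiffOn ℝ (⊤ : ℕ∞) ξt U)
    (hξtrans : ∀ q ∈ U, ξ q ∉ Submodule.span ℝ {w1 q, w2 q})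
    (hξttrans : ∀ q ∈ U, ξt q ∉ Submodule.span ℝ {w1t q, w2t q})
    (D111 D211 D112 D212 D121 D221 D122 D222
      h11 h12 h21 h22 S11 S12 S21 S22 : ℝ × ℝ → ℝ)
    (hw1u1 : ∀ q ∈ U, pd1 w1 q = D111 q • w1 q + D211 q • w2 q + h11 q • ξ q)
    (hw1u2 : ∀ q ∈ U, pd2 w1 q = D112 q • w1 q + D212 q • w2 q + h12 q • ξ q)
    (hw2u1 : ∀ q ∈ U, pd1 w2 q = D121 q • w1 q + D221 q • w2 q + h21 q • ξ q)
    (hw2u2 : ∀ q ∈ U, pd2 w2 q = D122 q • w1 q + D222 q • w2 q + h22 q • ξ q)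
    (hξu1 : ∀ q ∈ U, pd1 ξ q = -(S11 q) • w1 q - S12 q • w2 q)
    (hξu2 : ∀ q ∈ U, pd2 ξ q = -(S21 q) • w1 q - S22 q • w2 q)
    (hw1tu1 : ∀ q ∈ U, pd1 w1t q = D111 q • w1t q + D211 q • w2t q + h11 q • ξt q)
    (hw1tu2 : ∀ q ∈ U, pd2 w1t q = D112 q • w1t q + D212 q • w2t q + h12 q • ξt q)
    (hw2tu1 : ∀ q ∈ U, pd1 w2t q = D121 q • w1t q + D221 q • w2t q + h21 q • ξt q)
    (hw2tu2 : ∀ q ∈ U, pd2 w2t q = D122 q • w1t q + D222 q • w2t q + h22 q • ξt q)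
    (hξtu1 : ∀ q ∈ U, pd1 ξt q = -(S11 q) • w1t q - S12 q • w2t q)
    (hξtu2 : ∀ q ∈ U, pd2 ξt q = -(S21 q) • w1t q - S22 q • w2t q) :
    ∃ (L : V3 ≃ₗ[ℝ] V3) (a : V3), ∀ q ∈ U, xt q = L (x q) + a := by
  classical
  obtain ⟨q₀, hq₀⟩ := hconn.nonempty
  have hdiff : ∀ (f : ℝ × ℝ → V3), ContDiffOn ℝ (⊤ : ℕ∞) f U → ∀ q ∈ U, DifferentiableAt ℝ f q :=
    fun f hf q hq => (hf.differentiableOn (by simp)).differentiableAt (hU.mem_nhds hq)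
  set G : ℝ × ℝ → S17aux.CLM3 := fun q => S17aux.Psi (w1 q, w2 q, ξ q) with hGdef
  set Gt : ℝ × ℝ → S17aux.CLM3 := fun q => S17aux.Psi (w1t q, w2t q, ξt q) with hGtdef
  have hex : ∀ q ∈ U, ∃ u : (V3 →L[ℝ] V3)ˣ, (u : V3 →L[ℝ] V3) = G q :=
    fun q hq => S17aux.exists_unit (hΩ.2.2.1 q hq) (hξtrans q hq)
  have hext : ∀ q ∈ U, ∃ u : (V3 →L[ℝ] V3)ˣ, (u : V3 →L[ℝ] V3) = Gt q :=
    fun q hq => S17aux.exists_unit (hΩt.2.2.1 q hq) (hξttrans q hq)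
  choose! u hu using hex
  choose! ut hut using hext
  have hGd : ∀ q ∈ U, HasFDerivAt G
      (S17aux.Psi.comp ((fderiv ℝ w1 q).prod ((fderiv ℝ w2 q).prod (fderiv ℝ ξ q)))) q := by
    intro q hq
    exact S17aux.Psi.hasFDerivAt.comp q
      (HasFDerivAt.prodMk ((hdiff w1 hΩ.1 q hq).hasFDerivAt)
        (HasFDerivAt.prodMk ((hdiff w2 hΩ.2.1 q hq).hasFDerivAt) ((hdiff ξ hξs q hq).hasFDerivAt)))
  have hGtd : ∀ q ∈ U, HasFDerivAt Gt
      (S17aux.Psi.comp ((fderiv ℝ w1t q).prod ((fderiv ℝ w2t q).prod (fderiv ℝ ξt q)))) q := by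
    intro q hq
    exact S17aux.Psi.hasFDerivAt.comp q
      (HasFDerivAt.prodMk ((hdiff w1t hΩt.1 q hq).hasFDerivAt)
        (HasFDerivAt.prodMk ((hdiff w2t hΩt.2.1 q hq).hasFDerivAt) ((hdiff ξt hξts q hq).hasFDerivAt)))
  set C1 : ℝ × ℝ → S17aux.CLM3 := fun q =>
    S17aux.Psi (![D111 q, D211 q, h11 q], ![D121 q, D221 q, h21 q],
      ![-(S11 q), -(S12 q), 0]) with hC1def
  set C2 : ℝ × ℝ → S17aux.CLM3 := fun q =>
    S17aux.Psi (![D112 q, D212 q, h12 q], ![D122 q, D222 q, h22 q],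
      ![-(S21 q), -(S22 q), 0]) with hC2def
  have key1 : ∀ q ∈ U, S17aux.Psi (pd1 w1 q, pd1 w2 q, pd1 ξ q) = G q * C1 q :=
    fun q hq => S17aux.comp_eq _ _ _ _ _ _ _ _ _ _ _ _ _ _
      (hw1u1 q hq) (hw2u1 q hq) (hξu1 q hq)
  have key2 : ∀ q ∈ U, S17aux.Psi (pd2 w1 q, pd2 w2 q, pd2 ξ q) = G q * C2 q :=
    fun q hq => S17aux.comp_eq _ _ _ _ _ _ _ _ _ _ _ _ _ _
      (hw1u2 q hq) (hw2u2 q hq) (hξu2 q hq)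
  have keyt1 : ∀ q ∈ U, S17aux.Psi (pd1 w1t q, pd1 w2t q, pd1 ξt q) = Gt q * C1 q :=
    fun q hq => S17aux.comp_eq _ _ _ _ _ _ _ _ _ _ _ _ _ _
      (hw1tu1 q hq) (hw2tu1 q hq) (hξtu1 q hq)
  have keyt2 : ∀ q ∈ U, S17aux.Psi (pd2 w1t q, pd2 w2t q, pd2 ξt q) = Gt q * C2 q :=
    fun q hq => S17aux.comp_eq _ _ _ _ _ _ _ _ _ _ _ _ _ _
      (hw1tu2 q hq) (hw2tu2 q hq) (hξtu2 q hq)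
  set M : ℝ × ℝ → S17aux.CLM3 := fun q => Gt q * Ring.inverse (G q) with hMdef
  have hMd : ∀ q ∈ U, HasFDerivAt M (0 : (ℝ × ℝ) →L[ℝ] S17aux.CLM3) q := by
    intro q hq
    have hG' := hGd q hq
    have hGt' := hGtd q hq
    have hinv : HasFDerivAt (fun p => Ring.inverse (G p))
        ((-(ContinuousLinearMap.mulLeftRight ℝ S17aux.CLM3 ↑(u q)⁻¹ ↑(u q)⁻¹)).comp
          (S17aux.Psi.comp ((fderiv ℝ w1 q).prod ((fderiv ℝ w2 q).prod (fderiv ℝ ξ q))))) q := by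
      have h0 := hasFDerivAt_ringInverse (𝕜 := ℝ) (u q)
      rw [hu q hq] at h0
      exact h0.comp q hG'
    have hmul := hGt'.mul' hinv
    refine hmul.congr_fderiv ?_
    have hai : (↑(u q)⁻¹ : S17aux.CLM3) * G q = 1 := by
      rw [← hu q hq]; exact Units.inv_mul _
    apply S17aux.clm_ext2 <;>
      simp only [ContinuousLinearMap.add_apply, ContinuousLinearMap.smul_apply,
        ContinuousLinearMap.smulRight_apply, ContinuousLinearMap.comp_apply,
        ContinuousLinearMap.prod_apply, ContinuousLinearMap.neg_apply,
        ContinuousLinearMap.mulLeftRight_apply, ContinuousLinearMap.zero_apply,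
        smul_eq_mul]
    · rw [show ((fderiv ℝ w1 q) (1, 0), (fderiv ℝ w2 q) (1, 0), (fderiv ℝ ξ q) (1, 0))
          = (pd1 w1 q, pd1 w2 q, pd1 ξ q) from rfl,
        show ((fderiv ℝ w1t q) (1, 0), (fderiv ℝ w2t q) (1, 0), (fderiv ℝ ξt q) (1, 0))
          = (pd1 w1t q, pd1 w2t q, pd1 ξt q) from rfl,
        key1 q hq, keyt1 q hq, ← hu q hq, Ring.inverse_unit]
      exact S17aux.cancel_aux _ _ _ _ (Units.inv_mul _)
    · rw [show ((fderiv ℝ w1 q) (0, 1), (fderiv ℝ w2 q) (0, 1), (fderiv ℝ ξ q) (0, 1))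
          = (pd2 w1 q, pd2 w2 q, pd2 ξ q) from rfl,
        show ((fderiv ℝ w1t q) (0, 1), (fderiv ℝ w2t q) (0, 1), (fderiv ℝ ξt q) (0, 1))
          = (pd2 w1t q, pd2 w2t q, pd2 ξt q) from rfl,
        key2 q hq, keyt2 q hq, ← hu q hq, Ring.inverse_unit]
      exact S17aux.cancel_aux _ _ _ _ (Units.inv_mul _)
  have hconstM := S17aux.const_of_zero_deriv hU hconn.isPreconnected hMd
  set Lu : (V3 →L[ℝ] V3)ˣ := ut q₀ * (u q₀)⁻¹ with hLudef
  have hMq0 : M q₀ = ↑Lu := by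
    rw [hMdef]
    simp only
    rw [← hu q₀ hq₀, Ring.inverse_unit, ← hut q₀ hq₀, hLudef, Units.val_mul]
  have hMall : ∀ q ∈ U, Gt q = (↑Lu : S17aux.CLM3) * G q := by
    intro q hq
    have h1 : M q = ↑Lu := (hconstM q hq q₀ hq₀).trans hMq0
    have h2 : M q * G q = Gt q := by
      rw [hMdef]
      simp only
      rw [mul_assoc, ← hu q hq, Ring.inverse_unit, Units.inv_mul, mul_one]
    rw [← h2, h1]
  have hw1eq : ∀ q ∈ U, (↑Lu : S17aux.CLM3) (w1 q) = w1t q := by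
    intro q hq
    have h := congrArg (fun T : S17aux.CLM3 => T ![1, 0, 0]) (hMall q hq)
    simpa [hGdef, hGtdef, ContinuousLinearMap.mul_apply] using h.symm
  have hw2eq : ∀ q ∈ U, (↑Lu : S17aux.CLM3) (w2 q) = w2t q := by
    intro q hq
    have h := congrArg (fun T : S17aux.CLM3 => T ![0, 1, 0]) (hMall q hq)
    simpa [hGdef, hGtdef, ContinuousLinearMap.mul_apply] using h.symm
  have hfinal : ∀ q ∈ U, HasFDerivAt (fun p => xt p - (↑Lu : S17aux.CLM3) (x p))
      (0 : (ℝ × ℝ) →L[ℝ] V3) q := by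
    intro q hq
    have hx' := (hdiff x hx q hq).hasFDerivAt
    have hxt' := (hdiff xt hxt q hq).hasFDerivAt
    have hcomp : HasFDerivAt (fun p => (↑Lu : S17aux.CLM3) (x p))
        ((↑Lu : S17aux.CLM3).comp (fderiv ℝ x q)) q :=
      ((↑Lu : S17aux.CLM3).hasFDerivAt).comp q hx'
    refine (hxt'.sub hcomp).congr_fderiv ?_
    apply S17aux.clm_ext2 <;>
      simp only [ContinuousLinearMap.sub_apply, ContinuousLinearMap.comp_apply,
        ContinuousLinearMap.zero_apply]
    · rw [show (fderiv ℝ xt q) (1, 0) = pd1 xt q from rfl,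
        show (fderiv ℝ x q) (1, 0) = pd1 x q from rfl,
        (hDxt q hq).1, (hDx q hq).1, map_add, _root_.map_smul, _root_.map_smul,
        hw1eq q hq, hw2eq q hq, sub_self]
    · rw [show (fderiv ℝ xt q) (0, 1) = pd2 xt q from rfl,
        show (fderiv ℝ x q) (0, 1) = pd2 x q from rfl,
        (hDxt q hq).2, (hDx q hq).2, map_add, _root_.map_smul, _root_.map_smul,
        hw1eq q hq, hw2eq q hq, sub_self]
  have hconstF := S17aux.const_of_zero_deriv hU hconn.isPreconnected hfinal
  refine ⟨LinearEquiv.ofLinear ((↑Lu : S17aux.CLM3) : V3 →ₗ[ℝ] V3)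
      ((↑(Lu⁻¹) : S17aux.CLM3) : V3 →ₗ[ℝ] V3) ?_ ?_,
    xt q₀ - (↑Lu : S17aux.CLM3) (x q₀), ?_⟩
  · apply LinearMap.ext; intro v
    simp only [LinearMap.comp_apply, LinearMap.id_apply, ContinuousLinearMap.coe_coe]
    rw [← ContinuousLinearMap.mul_apply, Lu.mul_inv, ContinuousLinearMap.one_apply]
  · apply LinearMap.ext; intro v
    simp only [LinearMap.comp_apply, LinearMap.id_apply, ContinuousLinearMap.coe_coe]
    rw [← ContinuousLinearMap.mul_apply, Lu.inv_mul, ContinuousLinearMap.one_apply]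
  · intro q hq
    have h := hconstF q hq q₀ hq₀
    rw [LinearEquiv.ofLinear_apply]
    have := sub_eq_iff_eq_add.mp h
    rw [this]
    simp [add_comm]


end
end

section
/- Define x: ℝ² → ℝ³ by x(u₁,u₂) = (u₁, 12u₁²u₂ − 4u₂³, u₁⁴ + 6u₁²u₂² − 3u₂⁴), and set ρ(u₁,u₂) := 16u₁⁶ − 96u₁⁴u₂² + 144u₁²u₂⁴ + u₂² + 1. Then: (i) x is a proper frontal with unit normal field n = (12u₁u₂² − 4u₁³, −u₂, 1)/√ρ and singular set Σ(x) = {(u₁,u₂) : u₁² = u₂²}; indeed Dx = ΩΛᵀ with Ω having columns w₁ = (1, 24u₁u₂, 4u₁³ + 12u₁u₂²), w₂ = (0, 1, u₂) and Λ = diag(1, 12u₁² − 12u₂²); (ii) on ℝ²∖Σ(x) the Gaussian curvature K = (eg−f²)/(EG−F²) of x equals 1/ρ², so K has a smooth nowhere-vanishing extension to all of ℝ²; (iii) the constant field ξ = (0,0,1) satisfies ⟨ξ, n⟩ = |K|^{1/4} on ℝ²∖Σ(x) and is (trivially) equiaffine, and hence ξ is the Blaschke vector field of x. -/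
open Matrix Topology Filter

noncomputable section

/-- The frontal of Example 6.3: `x = (u₁, 12u₁²u₂ − 4u₂³, u₁⁴ + 6u₁²u₂² − 3u₂⁴)`. -/
def xEx (q : ℝ × ℝ) : V3 :=
  ![q.1, 12 * q.1 ^ 2 * q.2 - 4 * q.2 ^ 3,
    q.1 ^ 4 + 6 * q.1 ^ 2 * q.2 ^ 2 - 3 * q.2 ^ 4]

/-- `ρ = 16u₁⁶ − 96u₁⁴u₂² + 144u₁²u₂⁴ + u₂² + 1`. -/
def ρEx (q : ℝ × ℝ) : ℝ :=
  16 * q.1 ^ 6 - 96 * q.1 ^ 4 * q.2 ^ 2 + 144 * q.1 ^ 2 * q.2 ^ 4 + q.2 ^ 2 + 1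

/-- The unit normal `n = (12u₁u₂² − 4u₁³, −u₂, 1)/√ρ`. -/
def nEx (q : ℝ × ℝ) : V3 :=
  (Real.sqrt (ρEx q))⁻¹ • ![12 * q.1 * q.2 ^ 2 - 4 * q.1 ^ 3, -q.2, 1]

/-- First column of the tmb: `w₁ = (1, 24u₁u₂, 4u₁³ + 12u₁u₂²)`. -/
def w1Ex (q : ℝ × ℝ) : V3 := ![1, 24 * q.1 * q.2, 4 * q.1 ^ 3 + 12 * q.1 * q.2 ^ 2]

/-- Second column of the tmb: `w₂ = (0, 1, u₂)`. -/
def w2Ex (q : ℝ × ℝ) : V3 := ![0, 1, q.2]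

set_option linter.unnecessarySeqFocus false in
-- ===== auxiliary lemmas =====

/-- second tangent direction: `pd2 xEx`. -/
def d2Ex (q : ℝ × ℝ) : V3 :=
  ![0, 12 * q.1 ^ 2 - 12 * q.2 ^ 2, 12 * q.1 ^ 2 * q.2 - 12 * q.2 ^ 3]

theorem hasF_mono (c : ℝ) (m n : ℕ) (q : ℝ × ℝ) :
    HasFDerivAt (fun p : ℝ × ℝ => c * (p.1 ^ m * p.2 ^ n))
      (c • ((q.2 ^ n) • ((m * q.1 ^ (m-1) : ℝ) • ContinuousLinearMap.fst ℝ ℝ ℝ)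
        + (q.1 ^ m) • ((n * q.2 ^ (n-1) : ℝ) • ContinuousLinearMap.snd ℝ ℝ ℝ))) q := by
  have h1 : HasFDerivAt (fun p : ℝ × ℝ => p.1 ^ m)
      ((m * q.1 ^ (m-1) : ℝ) • ContinuousLinearMap.fst ℝ ℝ ℝ) q :=
    (hasDerivAt_pow m q.1).comp_hasFDerivAt q hasFDerivAt_fst
  have h2 : HasFDerivAt (fun p : ℝ × ℝ => p.2 ^ n)
      ((n * q.2 ^ (n-1) : ℝ) • ContinuousLinearMap.snd ℝ ℝ ℝ) q :=
    (hasDerivAt_pow n q.2).comp_hasFDerivAt q hasFDerivAt_snd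
  have := (h1.mul h2).const_mul c
  refine this.congr_fderiv ?_
  module

theorem HasFDerivAt.congr' {f g : ℝ × ℝ → ℝ} {D : ℝ × ℝ →L[ℝ] ℝ} {q : ℝ × ℝ}
    (h : HasFDerivAt f D q) (e : g = f) : HasFDerivAt g D q := e ▸ h

theorem hasFDerivAt_vec3 {f0 f1 f2 : ℝ × ℝ → ℝ} {D0 D1 D2 : ℝ × ℝ →L[ℝ] ℝ} {q : ℝ × ℝ}
    (h0 : HasFDerivAt f0 D0 q) (h1 : HasFDerivAt f1 D1 q) (h2 : HasFDerivAt f2 D2 q) :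
    HasFDerivAt (fun p => (![f0 p, f1 p, f2 p] : V3))
      (ContinuousLinearMap.pi ![D0, D1, D2]) q := by
  rw [hasFDerivAt_pi']
  intro i
  fin_cases i <;> simpa [ContinuousLinearMap.proj_pi] using ‹_›


theorem pdx_lemmas (q : ℝ × ℝ) : pd1 xEx q = w1Ex q ∧ pd2 xEx q = d2Ex q := by
  have h0 : HasFDerivAt (fun p : ℝ × ℝ => p.1) _ q :=
    (hasF_mono 1 1 0 q).congr' (by funext p; ring)
  have h1 : HasFDerivAt (fun p : ℝ × ℝ => 12 * p.1 ^ 2 * p.2 - 4 * p.2 ^ 3) _ q :=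
    ((hasF_mono 12 2 1 q).sub (hasF_mono 4 0 3 q)).congr' (by funext p; simp only [Pi.sub_apply]; ring)
  have h2 : HasFDerivAt
      (fun p : ℝ × ℝ => p.1 ^ 4 + 6 * p.1 ^ 2 * p.2 ^ 2 - 3 * p.2 ^ 4) _ q :=
    (((hasF_mono 1 4 0 q).add (hasF_mono 6 2 2 q)).sub (hasF_mono 3 0 4 q)).congr'
      (by funext p; simp only [Pi.add_apply, Pi.sub_apply]; ring)
  have H : HasFDerivAt xEx _ q := hasFDerivAt_vec3 h0 h1 h2
  constructor <;> [rw [pd1, H.fderiv]; rw [pd2, H.fderiv]] <;> funext i <;>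
    fin_cases i <;> simp [w1Ex, d2Ex, ContinuousLinearMap.pi_apply] <;> ring

theorem pd1_xEx (q : ℝ × ℝ) : pd1 xEx q = w1Ex q := (pdx_lemmas q).1
theorem pd2_xEx (q : ℝ × ℝ) : pd2 xEx q = d2Ex q := (pdx_lemmas q).2

theorem pdw1_lemmas (q : ℝ × ℝ) :
    pd1 w1Ex q = ![0, 24 * q.2, 12 * q.1 ^ 2 + 12 * q.2 ^ 2] ∧
    pd2 w1Ex q = ![0, 24 * q.1, 24 * q.1 * q.2] := by
  have h0 : HasFDerivAt (fun _ : ℝ × ℝ => (1 : ℝ)) _ q :=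
    (hasF_mono 1 0 0 q).congr' (by funext p; ring)
  have h1 : HasFDerivAt (fun p : ℝ × ℝ => 24 * p.1 * p.2) _ q :=
    (hasF_mono 24 1 1 q).congr' (by funext p; ring)
  have h2 : HasFDerivAt (fun p : ℝ × ℝ => 4 * p.1 ^ 3 + 12 * p.1 * p.2 ^ 2) _ q :=
    ((hasF_mono 4 3 0 q).add (hasF_mono 12 1 2 q)).congr' (by funext p; simp only [Pi.add_apply]; ring)
  have H : HasFDerivAt w1Ex _ q := hasFDerivAt_vec3 h0 h1 h2
  constructor <;> [rw [pd1, H.fderiv]; rw [pd2, H.fderiv]] <;> funext i <;>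
    fin_cases i <;> simp [ContinuousLinearMap.pi_apply] <;> ring

theorem pd2_d2Ex (q : ℝ × ℝ) :
    pd2 d2Ex q = ![0, -24 * q.2, 12 * q.1 ^ 2 - 36 * q.2 ^ 2] := by
  have h0 : HasFDerivAt (fun _ : ℝ × ℝ => (0 : ℝ)) _ q :=
    (hasF_mono 0 0 0 q).congr' (by funext p; ring)
  have h1 : HasFDerivAt (fun p : ℝ × ℝ => 12 * p.1 ^ 2 - 12 * p.2 ^ 2) _ q :=
    ((hasF_mono 12 2 0 q).sub (hasF_mono 12 0 2 q)).congr' (by funext p; simp only [Pi.sub_apply]; ring)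
  have h2 : HasFDerivAt (fun p : ℝ × ℝ => 12 * p.1 ^ 2 * p.2 - 12 * p.2 ^ 3) _ q :=
    ((hasF_mono 12 2 1 q).sub (hasF_mono 12 0 3 q)).congr' (by funext p; simp only [Pi.sub_apply]; ring)
  have H : HasFDerivAt d2Ex _ q := hasFDerivAt_vec3 h0 h1 h2
  rw [pd2, H.fderiv]
  funext i
  fin_cases i <;> simp [ContinuousLinearMap.pi_apply] <;> ring


theorem pd1_xEx' : pd1 xEx = w1Ex := funext pd1_xEx
theorem pd2_xEx' : pd2 xEx = d2Ex := funext pd2_xEx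

theorem rho_ge_one (q : ℝ × ℝ) : 1 ≤ ρEx q := by
  have h1 := sq_nonneg (4 * q.1 ^ 3 - 12 * q.1 * q.2 ^ 2)
  have h2 := sq_nonneg q.2
  unfold ρEx; nlinarith

theorem rho_pos (q : ℝ × ℝ) : 0 < ρEx q := lt_of_lt_of_le one_pos (rho_ge_one q)
theorem rho_ne (q : ℝ × ℝ) : ρEx q ≠ 0 := (rho_pos q).ne'
theorem sqrt_rho_pos (q : ℝ × ℝ) : 0 < Real.sqrt (ρEx q) := Real.sqrt_pos.mpr (rho_pos q)
theorem sqrt_rho_ne (q : ℝ × ℝ) : Real.sqrt (ρEx q) ≠ 0 := (sqrt_rho_pos q).ne'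
theorem sq_sqrt_rho (q : ℝ × ℝ) : Real.sqrt (ρEx q) ^ 2 = ρEx q :=
  Real.sq_sqrt (rho_pos q).le

theorem contDiff_vec3 {f0 f1 f2 : ℝ × ℝ → ℝ} (h0 : ContDiff ℝ (⊤ : ℕ∞) f0)
    (h1 : ContDiff ℝ (⊤ : ℕ∞) f1) (h2 : ContDiff ℝ (⊤ : ℕ∞) f2) :
    ContDiff ℝ (⊤ : ℕ∞) (fun p => (![f0 p, f1 p, f2 p] : V3)) := by
  rw [contDiff_pi]
  intro i
  fin_cases i <;> simpa

theorem contDiff_xEx : ContDiff ℝ (⊤ : ℕ∞) xEx :=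
  contDiff_vec3 (by fun_prop) (by fun_prop) (by fun_prop)

theorem contDiff_w1Ex : ContDiff ℝ (⊤ : ℕ∞) w1Ex :=
  contDiff_vec3 (by fun_prop) (by fun_prop) (by fun_prop)

theorem contDiff_w2Ex : ContDiff ℝ (⊤ : ℕ∞) w2Ex :=
  contDiff_vec3 (by fun_prop) (by fun_prop) (by fun_prop)

theorem contDiff_rho : ContDiff ℝ (⊤ : ℕ∞) ρEx := by unfold ρEx; fun_prop

theorem contDiff_nEx : ContDiff ℝ (⊤ : ℕ∞) nEx := by
  rw [contDiff_iff_contDiffAt]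
  intro q
  apply ContDiffAt.smul (f := fun q => (Real.sqrt (ρEx q))⁻¹) (g := fun q => (![12 * q.1 * q.2 ^ 2 - 4 * q.1 ^ 3, -q.2, 1] : V3))
  · exact ((Real.contDiffAt_sqrt (rho_ne q)).comp q contDiff_rho.contDiffAt).inv (sqrt_rho_ne q)
  · exact (contDiff_vec3 (by fun_prop) (by fun_prop) (by fun_prop)).contDiffAt

theorem d2_eq_smul (q : ℝ × ℝ) : d2Ex q = (12 * q.1 ^ 2 - 12 * q.2 ^ 2) • w2Ex q := by
  funext i
  fin_cases i <;> simp [d2Ex, w2Ex] <;> ring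

theorem singset_eq : SingSet xEx Set.univ = {q : ℝ × ℝ | q.1 ^ 2 = q.2 ^ 2} := by
  ext q
  simp only [SingSet, Set.mem_setOf_eq, Set.mem_univ, true_and, pd1_xEx, pd2_xEx]
  constructor
  · intro h
    by_contra hne
    apply h
    rw [linearIndependent_fin2]
    constructor
    · intro h0
      have := congrFun h0 1
      simp [d2Ex] at this
      apply hne
      nlinarith [this]
    · intro a h0
      have := congrFun h0 0
      simp [d2Ex, w1Ex, Matrix.cons_val_one, Matrix.head_cons] at this
  · intro hq h
    have h1 := (linearIndependent_fin2.mp h).1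
    simp only [Matrix.cons_val_one, Matrix.head_cons] at h1
    apply h1
    funext i
    fin_cases i <;> simp [d2Ex] <;> [linarith; (rw [show q.1^2 = q.2^2 from hq]; ring)]

theorem interior_sq_empty : interior {q : ℝ × ℝ | q.1 ^ 2 = q.2 ^ 2} = ∅ := by
  ext q
  simp only [Set.mem_empty_iff_false, iff_false]
  intro hq
  rw [mem_interior_iff_mem_nhds, Metric.mem_nhds_iff] at hq
  obtain ⟨ε, hε, hball⟩ := hq
  have hmem : ∀ t : ℝ, |t| < ε → q.1 ^ 2 = (q.2 + t) ^ 2 := by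
    intro t ht
    have : (q.1, q.2 + t) ∈ Metric.ball q ε := by
      rw [Metric.mem_ball, Prod.dist_eq]
      simp [Real.dist_eq, ht, hε]
    exact hball this
  have h0 : q.1 ^ 2 = (q.2 + 0) ^ 2 := hmem 0 (by simpa using hε)
  have h1 := hmem (ε/2) (by rw [abs_of_pos (by linarith)]; linarith)
  have h2 := hmem (-(ε/2)) (by rw [abs_of_neg (by linarith)]; linarith)
  nlinarith

theorem nEx_apply (q : ℝ × ℝ) (i : Fin 3) :
    nEx q i = (Real.sqrt (ρEx q))⁻¹ * ![12 * q.1 * q.2 ^ 2 - 4 * q.1 ^ 3, -q.2, 1] i := rfl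

theorem dot3_e (q : ℝ × ℝ) : dot3 (pd1 w1Ex q) (nEx q)
    = (12 * q.1 ^ 2 - 12 * q.2 ^ 2) / Real.sqrt (ρEx q) := by
  rw [(pdw1_lemmas q).1]
  simp [dot3, nEx_apply]
  field_simp
  ring

theorem dot3_f (q : ℝ × ℝ) : dot3 (pd2 w1Ex q) (nEx q) = 0 := by
  rw [(pdw1_lemmas q).2]
  simp [dot3, nEx_apply]
  ring

theorem dot3_g (q : ℝ × ℝ) : dot3 (pd2 d2Ex q) (nEx q)
    = (12 * q.1 ^ 2 - 12 * q.2 ^ 2) / Real.sqrt (ρEx q) := by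
  rw [pd2_d2Ex]
  simp [dot3, nEx_apply]
  field_simp
  ring

theorem dot3_EG (q : ℝ × ℝ) :
    dot3 (w1Ex q) (w1Ex q) * dot3 (d2Ex q) (d2Ex q) - dot3 (w1Ex q) (d2Ex q) ^ 2
      = (12 * q.1 ^ 2 - 12 * q.2 ^ 2) ^ 2 * ρEx q := by
  simp [dot3, w1Ex, d2Ex, ρEx]
  ring

theorem gaussK_eq (q : ℝ × ℝ) (hq : q.1 ^ 2 ≠ q.2 ^ 2) :
    gaussK xEx nEx q = 1 / (ρEx q) ^ 2 := by
  have hl : (12 * q.1 ^ 2 - 12 * q.2 ^ 2) ≠ 0 := by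
    intro h; apply hq; linarith
  rw [gaussK, pd1_xEx', pd2_xEx', dot3_e, dot3_f, dot3_g, dot3_EG]
  rw [div_mul_div_comm, Real.mul_self_sqrt (rho_pos q).le]
  rw [show (12 * q.1 ^ 2 - 12 * q.2 ^ 2) * (12 * q.1 ^ 2 - 12 * q.2 ^ 2) / ρEx q - 0 ^ 2
      = (12 * q.1 ^ 2 - 12 * q.2 ^ 2) ^ 2 / ρEx q from by ring, div_div,
    div_eq_div_iff (mul_ne_zero (rho_ne q) (mul_ne_zero (pow_ne_zero 2 hl) (rho_ne q)))
      (pow_ne_zero 2 (rho_ne q))]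
  ring

theorem dot3_xi_n (q : ℝ × ℝ) : dot3 ![0, 0, 1] (nEx q) = (Real.sqrt (ρEx q))⁻¹ := by
  simp [dot3, nEx_apply]

theorem blaschke_dot (q : ℝ × ℝ) (hq : q.1 ^ 2 ≠ q.2 ^ 2) :
    dot3 ![0, 0, 1] (nEx q) = |gaussK xEx nEx q| ^ ((4 : ℝ)⁻¹) := by
  rw [dot3_xi_n, gaussK_eq q hq]
  set s := Real.sqrt (ρEx q) with hs
  have hspos : 0 < s := sqrt_rho_pos q
  have hs2 : s ^ 2 = ρEx q := sq_sqrt_rho q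
  have habs : |1 / (ρEx q) ^ 2| = s ^ ((-4 : ℝ)) := by
    have hr := rho_pos q
    rw [abs_of_pos (by positivity), Real.rpow_neg hspos.le]
    rw [show ((4:ℝ)) = ((4:ℕ):ℝ) by norm_num, Real.rpow_natCast]
    rw [show s ^ (4:ℕ) = ρEx q ^ 2 from by rw [show (4:ℕ) = 2*2 from rfl, pow_mul, hs2]]
    rw [one_div]
  rw [habs, ← Real.rpow_mul hspos.le]
  norm_num [Real.rpow_neg_one]

theorem pd_const (c : V3) (q : ℝ × ℝ) :
    pd1 (fun _ : ℝ × ℝ => c) q = 0 ∧ pd2 (fun _ : ℝ × ℝ => c) q = 0 := by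
  constructor <;> simp [pd1, pd2, fderiv_fun_const]

theorem tangential_mem (q : ℝ × ℝ) (hq : q.1 ^ 2 ≠ q.2 ^ 2) :
    (![0, 0, 1] : V3) - dot3 ![0, 0, 1] (nEx q) • nEx q ∈ tangentSpan xEx q := by
  have hl : (12 * q.1 ^ 2 - 12 * q.2 ^ 2) ≠ 0 := fun h => hq (by linarith)
  have hρ := rho_ne q
  have hsn : dot3 ![0, 0, 1] (nEx q) • nEx q
      = (ρEx q)⁻¹ • ![12 * q.1 * q.2 ^ 2 - 4 * q.1 ^ 3, -q.2, 1] := by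
    rw [dot3_xi_n, nEx, smul_smul, ← mul_inv, Real.mul_self_sqrt (rho_pos q).le]
  rw [tangentSpan, pd1_xEx, pd2_xEx, hsn]
  rw [Submodule.mem_span_pair]
  refine ⟨(4 * q.1 ^ 3 - 12 * q.1 * q.2 ^ 2) / ρEx q,
    q.2 * (1 - 96 * q.1 ^ 4 + 288 * q.1 ^ 2 * q.2 ^ 2) / (ρEx q * (12 * q.1 ^ 2 - 12 * q.2 ^ 2)),
    ?_⟩
  funext i
  have hρe : 16 * q.1 ^ 6 - 96 * q.1 ^ 4 * q.2 ^ 2 + 144 * q.1 ^ 2 * q.2 ^ 4 + q.2 ^ 2 + 1 ≠ 0 := by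
    have := rho_ne q; simpa [ρEx] using this
  have hD : q.1 ^ 2 * (q.1 ^ 2 * (q.1 ^ 2 * 16 - q.2 ^ 2 * 96) + q.2 ^ 4 * 144) + q.2 ^ 2 + 1 ≠ 0 := by
    convert hρe using 1; ring
  fin_cases i <;>
    simp [w1Ex, d2Ex, ρEx, Pi.smul_apply, smul_eq_mul] <;>
    field_simp <;> ring

theorem unit_normal (q : ℝ × ℝ) : dot3 (nEx q) (nEx q) = 1 := by
  have hs := Real.mul_self_sqrt (rho_pos q).le
  have h0 := sqrt_rho_ne q
  simp [dot3, nEx_apply]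
  field_simp
  rw [sq_sqrt_rho]
  unfold ρEx; ring

theorem orth1 (q : ℝ × ℝ) : dot3 (pd1 xEx q) (nEx q) = 0 := by
  rw [pd1_xEx]; simp [dot3, nEx_apply, w1Ex]; ring

theorem orth2 (q : ℝ × ℝ) : dot3 (pd2 xEx q) (nEx q) = 0 := by
  rw [pd2_xEx]; simp [dot3, nEx_apply, d2Ex]; ring

theorem linind_w (q : ℝ × ℝ) : LinearIndependent ℝ ![w1Ex q, w2Ex q] := by
  rw [linearIndependent_fin2]
  constructor
  · intro h
    have := congrFun h 1
    simp [w2Ex] at this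
  · intro a h
    have := congrFun h 0
    simp [w1Ex, w2Ex] at this

/-- The map `x(u₁,u₂) = (u₁, 12u₁²u₂ − 4u₂³, u₁⁴ + 6u₁²u₂² − 3u₂⁴)` is a
proper frontal (a rank-1 wave front) with `Σ(x) = {u₁² = u₂²}` and `Dx = ΩΛᵀ` with
`Λ = diag(1, 12u₁² − 12u₂²)`; on the regular part its Gaussian curvature is `1/ρ²`,
hence has a smooth nowhere-vanishing extension to `ℝ²`; and the constant field
`ξ = (0,0,1)` satisfies `⟨ξ, n⟩ = |K|^{1/4}` there and is the Blaschke vector field. -/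
theorem statement18 :
    IsFrontal xEx nEx Set.univ ∧ IsProper xEx Set.univ ∧
    SingSet xEx Set.univ = {q : ℝ × ℝ | q.1 ^ 2 = q.2 ^ 2} ∧
    IsTMB xEx w1Ex w2Ex Set.univ ∧
    (∀ q : ℝ × ℝ,
      pd1 xEx q = (1 : ℝ) • w1Ex q + (0 : ℝ) • w2Ex q ∧
      pd2 xEx q = (0 : ℝ) • w1Ex q + (12 * q.1 ^ 2 - 12 * q.2 ^ 2) • w2Ex q) ∧
    (∀ q ∈ Set.univ \ SingSet xEx Set.univ,
      gaussK xEx nEx q = 1 / (ρEx q) ^ 2) ∧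
    ContDiff ℝ (⊤ : ℕ∞) (fun q => 1 / (ρEx q) ^ 2) ∧
    (∀ q : ℝ × ℝ, 1 / (ρEx q) ^ 2 ≠ 0) ∧
    (∀ q ∈ Set.univ \ SingSet xEx Set.univ,
      dot3 ![0, 0, 1] (nEx q) = |gaussK xEx nEx q| ^ ((4 : ℝ)⁻¹)) ∧
    IsBlaschkeField xEx nEx (fun _ => ![(0 : ℝ), 0, 1]) Set.univ := by
  have hreg : ∀ q : ℝ × ℝ, q ∈ Set.univ \ SingSet xEx Set.univ → q.1 ^ 2 ≠ q.2 ^ 2 := by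
    intro q hq
    have h := hq.2
    rw [singset_eq] at h
    exact h
  refine ⟨⟨isOpen_univ, contDiff_xEx.contDiffOn, contDiff_nEx.contDiffOn,
      fun q _ => unit_normal q, fun q _ => ⟨orth1 q, orth2 q⟩⟩,
    ?_, singset_eq,
    ⟨contDiff_w1Ex.contDiffOn, contDiff_w2Ex.contDiffOn, fun q _ => linind_w q,
      fun q _ => ⟨?_, ?_⟩⟩,
    fun q => ⟨?_, ?_⟩,
    fun q hq => gaussK_eq q (hreg q hq),
    ?_,
    fun q => div_ne_zero one_ne_zero (pow_ne_zero 2 (rho_ne q)),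
    fun q hq => blaschke_dot q (hreg q hq),
    contDiffOn_const,
    fun q hq => ⟨blaschke_dot q (hreg q hq), tangential_mem q (hreg q hq),
      by rw [(pd_const ![0,0,1] q).1]; exact zero_mem _,
      by rw [(pd_const ![0,0,1] q).2]; exact zero_mem _⟩⟩
  · rw [IsProper, singset_eq]
    exact interior_sq_empty
  · rw [pd1_xEx]
    exact Submodule.subset_span (Set.mem_insert _ _)
  · rw [pd2_xEx, d2_eq_smul]
    exact Submodule.smul_mem _ _ (Submodule.subset_span (Set.mem_insert_of_mem _ rfl))
  · rw [pd1_xEx, one_smul, zero_smul, add_zero]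
  · rw [pd2_xEx, d2_eq_smul, zero_smul, zero_add]
  · simp only [one_div]
    exact (contDiff_rho.pow 2).inv (fun x => pow_ne_zero 2 (rho_ne x))

end
end
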